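/- arXiv:2208.01972 — 9 statements merged into one kernel-verified Lean document; each statement's English description precedes it below -/
import Mathlib

section
/- There exists τ_K > 0 such that F(τ) > 0 for every τ ∈ (0, τ_K). -/
open Real

noncomputable def psiD (μ σ r τ : ℝ) : ℝ :=
  ((1 - Real.exp (-((σ - 1) * τ * r * Real.pi))) / ((σ - 1) * τ * r * Real.pi)) ^ (μ / (σ - 1))

noncomputable def chi (μ r τ : ℝ) : ℝ :=
  (Real.exp (μ * τ * r * Real.pi) - 1) / (μ * τ * r * Real.pi)

noncomputable def Ffun (μ σ r τ : ℝ) : ℝ :=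
  1 - ((1 - μ) / μ) * (psiD μ σ r τ * chi μ r τ - 1) - psiD μ σ r τ

set_option maxHeartbeats 1000000

lemma cubic_bound {y : ℝ} (h : |y| ≤ 1) :
    |Real.exp y - (1 + y + y ^ 2 / 2)| ≤ (2 / 9) * |y| ^ 3 := by
  have h3 : (0:ℕ) < 3 := by norm_num
  have hb := Real.exp_bound h h3
  have hs : ∑ m ∈ Finset.range 3, y ^ m / (Nat.factorial m) = 1 + y + y ^ 2 / 2 := by
    norm_num [Finset.sum_range_succ, Nat.factorial]
  rw [hs] at hb
  calc |Real.exp y - (1 + y + y ^ 2 / 2)| ≤ |y| ^ 3 * ((3:ℕ).succ / ((Nat.factorial 3) * 3)) := hb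
    _ = (2/9) * |y| ^ 3 := by norm_num [Nat.factorial]; ring

lemma core (μ m s t ψ χ : ℝ) (hμ0 : 0 < μ) (hμ1 : μ < 1)
    (hm0 : 0 < m) (hm_half : m < 1/2)
    (ht0 : 0 ≤ t) (ht1 : t ≤ m)
    (ht_lb : m/2 - (2/9)*(m*s) ≤ t)
    (hψ : ψ ≤ 1 - t + t^2/2 + (2/9)*t^3) (hψ_le1 : ψ ≤ 1)
    (hχ_ub : χ ≤ 1 + m/2 + (2/9)*m^2) (hχ_lb : 1 ≤ χ)
    (hcond : (2/9)*(m*s) + (5/6)*m^2 < μ*m/2) :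
    0 < 1 - (1-μ)/μ * (ψ*χ - 1) - ψ := by
  have hcross : ψ*χ - 1 ≤ (χ-1) + (ψ-1) := by
    nlinarith [mul_nonneg (sub_nonneg.2 hψ_le1) (sub_nonneg.2 hχ_lb)]
  have hC : (1-μ)*(χ-1) ≤ m/2 - μ*m/2 + (2/9)*m^2 := by
    have h1 := mul_le_mul_of_nonneg_left (show χ - 1 ≤ m/2 + (2/9)*m^2 by linarith)
      (show (0:ℝ) ≤ 1-μ by linarith)
    nlinarith [h1, mul_nonneg hμ0.le (sq_nonneg m)]
  have ht2 : t^2 ≤ m^2 := by nlinarith [ht1, ht0]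
  have ht3 : t^3 ≤ m^2/2 := by
    have h31 : t^3 ≤ m^2 * t := by nlinarith [ht2, ht0, ht1]
    have h32 : m^2 * t ≤ m^2 * (1/2) := mul_le_mul_of_nonneg_left (by linarith) (sq_nonneg m)
    linarith
  have h2 : (1-μ)*(χ-1) < 1 - ψ := by linarith [hψ, hC, ht_lb, ht2, ht3, hcond]
  have h3 := mul_le_mul_of_nonneg_left hcross (show (0:ℝ) ≤ 1-μ by linarith)
  have hmain : 0 < μ*(1-ψ) - (1-μ)*(ψ*χ - 1) := by nlinarith [h2, h3]
  have heq : 1 - (1-μ)/μ * (ψ*χ - 1) - ψ = (μ*(1-ψ) - (1-μ)*(ψ*χ - 1))/μ := by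
    field_simp; ring
  rw [heq]
  exact div_pos hmain hμ0

lemma key (μ a x : ℝ) (hμ0 : 0 < μ) (hμ1 : μ < 1) (ha : 0 < a) (hx : 0 < x)
    (hxs : x * (2 + a) < μ / 2) :
    0 < 1 - ((1 - μ) / μ) * (((1 - Real.exp (-(a * x))) / (a * x)) ^ (μ / a) *
      ((Real.exp (μ * x) - 1) / (μ * x)) - 1) -
      ((1 - Real.exp (-(a * x))) / (a * x)) ^ (μ / a) := by
  set s := a * x with hs_def
  set m := μ * x with hm_def
  have hs0 : 0 < s := mul_pos ha hx
  have hm0 : 0 < m := mul_pos hμ0 hx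
  have hs_half : s < 1 / 2 := by
    rw [hs_def]; linarith [hxs, hx, hμ1]
  have hm_half : m < 1 / 2 := by
    rw [hm_def]
    linarith [hxs, hx, hμ1, mul_lt_mul_of_pos_right hμ1 hx, mul_nonneg ha.le hx.le]
  -- bounds on exp(-s)
  have habs : |(-s)| ≤ 1 := by rw [abs_neg, abs_of_pos hs0]; linarith
  have hes := cubic_bound habs
  rw [abs_neg, abs_of_pos hs0] at hes
  have hes' := abs_le.1 hes
  have hes1 : Real.exp (-s) ≤ 1 - s + s ^ 2 / 2 + (2/9) * s ^ 3 := by linarith [hes'.2]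
  have hes2 : 1 - s + s ^ 2 / 2 - (2/9) * s ^ 3 ≤ Real.exp (-s) := by linarith [hes'.1]
  set g := (1 - Real.exp (-s)) / s with hg_def
  have hg_lb : 1 - s / 2 - (2/9) * s ^ 2 ≤ g := by
    rw [hg_def, le_div_iff₀ hs0]; nlinarith [hes1, hs0, hs_half]
  have hg_ub : g ≤ 1 - s / 2 + (2/9) * s ^ 2 := by
    rw [hg_def, div_le_iff₀ hs0]; nlinarith [hes2, hs0, hs_half]
  have hss : s * s ≤ s * (1/2) := mul_le_mul_of_nonneg_left hs_half.le hs0.le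
  have hg_pos : 0 < g := by nlinarith [hg_lb, hss, hs_half, hs0]
  have hg_lt1 : g < 1 := by
    rw [hg_def, div_lt_one hs0]
    have := Real.add_one_lt_exp (show -s ≠ 0 by
      intro h; rw [neg_eq_zero] at h; exact hs0.ne' h)
    linarith
  set p := μ / a with hp_def
  have hp : 0 < p := div_pos hμ0 ha
  set ψ := g ^ p with hψ_def
  have hψ_pos : 0 < ψ := Real.rpow_pos_of_pos hg_pos p
  have hψ_le1 : ψ ≤ 1 := Real.rpow_le_one hg_pos.le hg_lt1.le hp.le
  set t := p * (1 - g) with ht_def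
  have hps : p * s = m := by rw [hp_def, hs_def, hm_def]; field_simp
  have hps2 : p * s ^ 2 = m * s := by rw [← hps]; ring
  have ht_lb : m / 2 - (2/9) * (m * s) ≤ t := by
    have h1 : p * (s / 2 - (2/9) * s ^ 2) ≤ t := by
      rw [ht_def]; apply mul_le_mul_of_nonneg_left _ hp.le; linarith
    linarith [h1, hps, hps2]
  have ht_ub : t ≤ m / 2 + (2/9) * (m * s) := by
    have h1 : t ≤ p * (s / 2 + (2/9) * s ^ 2) := by
      rw [ht_def]; apply mul_le_mul_of_nonneg_left _ hp.le; linarith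
    linarith [h1, hps, hps2]
  have hms_half : m * s ≤ m * (1/2) := mul_le_mul_of_nonneg_left hs_half.le hm0.le
  have hms0 : 0 ≤ m * s := mul_nonneg hm0.le hs0.le
  have ht0 : 0 ≤ t := by linarith
  have ht1 : t ≤ m := by linarith
  -- ψ ≤ exp (-t)
  have hψ_ub : ψ ≤ Real.exp (-t) := by
    rw [hψ_def, Real.rpow_def_of_pos hg_pos]
    apply Real.exp_le_exp.2
    have hlog := Real.log_le_sub_one_of_pos hg_pos
    have := mul_le_mul_of_nonneg_right hlog hp.le
    rw [ht_def]; linarith [this]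
  have habt : |(-t)| ≤ 1 := by rw [abs_neg, abs_of_nonneg ht0]; linarith
  have het := cubic_bound habt
  rw [abs_neg, abs_of_nonneg ht0] at het
  have het1 : Real.exp (-t) ≤ 1 - t + t ^ 2 / 2 + (2/9) * t ^ 3 := by
    linarith [(abs_le.1 het).2]
  have hψ1 : ψ ≤ 1 - t + t ^ 2 / 2 + (2/9) * t ^ 3 := le_trans hψ_ub het1
  -- chi bounds
  set χ := (Real.exp m - 1) / m with hχ_def
  have habm : |m| ≤ 1 := by rw [abs_of_pos hm0]; linarith
  have hem := cubic_bound habm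
  rw [abs_of_pos hm0] at hem
  have hem1 : Real.exp m ≤ 1 + m + m ^ 2 / 2 + (2/9) * m ^ 3 := by
    linarith [(abs_le.1 hem).2]
  have hχ_ub : χ ≤ 1 + m / 2 + (2/9) * m ^ 2 := by
    rw [hχ_def, div_le_iff₀ hm0]; linarith [hem1]
  have hχ_lb : 1 ≤ χ := by
    rw [hχ_def, le_div_iff₀ hm0]
    have := Real.add_one_le_exp m; linarith
  -- condition
  have hcond0 : (2/9) * s + (5/6) * m < μ / 2 := by
    rw [hs_def, hm_def]
    have h1 : 0 ≤ a * x := mul_nonneg ha.le hx.le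
    have h2 : μ * x < 1 * x := mul_lt_mul_of_pos_right hμ1 hx
    linarith [hxs, h1, h2, hx]
  have hcond : (2/9) * (m * s) + (5/6) * m ^ 2 < μ * m / 2 := by
    have := mul_lt_mul_of_pos_left hcond0 hm0
    linarith [this]
  exact core μ m s t ψ χ hμ0 hμ1 hm0 hm_half ht0 ht1 ht_lb hψ1 hψ_le1 hχ_ub hχ_lb hcond

theorem exists_tauK (μ σ r : ℝ) (hμ0 : 0 < μ) (hμ1 : μ < 1) (hσ : 1 < σ) (hr : 1 ≤ r) :
    ∃ τK : ℝ, 0 < τK ∧ ∀ τ : ℝ, τ ∈ Set.Ioo 0 τK → 0 < Ffun μ σ r τ := by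
  have hπ := Real.pi_pos
  have hr0 : (0:ℝ) < r := lt_of_lt_of_le one_pos hr
  have hσ1 : (0:ℝ) < σ + 1 := by linarith
  have hden : 0 < 2 * (σ + 1) * r * Real.pi := mul_pos (mul_pos (mul_pos two_pos hσ1) hr0) hπ
  refine ⟨μ / (2 * (σ + 1) * r * Real.pi), div_pos hμ0 hden, ?_⟩
  rintro τ ⟨hτ0, hτK⟩
  have hx : 0 < τ * r * Real.pi := mul_pos (mul_pos hτ0 hr0) hπ
  have hxs : (τ * r * Real.pi) * (2 + (σ - 1)) < μ / 2 := by
    have h := (lt_div_iff₀ hden).1 hτK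
    linarith [h]
  have ha : (0:ℝ) < σ - 1 := by linarith
  have h := key μ (σ - 1) (τ * r * Real.pi) hμ0 hμ1 ha hx hxs
  unfold Ffun psiD chi
  have e1 : (σ - 1) * τ * r * Real.pi = (σ - 1) * (τ * r * Real.pi) := by ring
  have e2 : μ * τ * r * Real.pi = μ * (τ * r * Real.pi) := by ring
  rw [e1, e2]
  exact h
end

section
/- The derivative (d/dτ)ψᴰ(τ) tends to -μ·r·π/2 as τ tends to 0 from the right. -/
open Real Filter

lemma neg_tendsto : Tendsto (fun u : ℝ => -u) (nhdsWithin 0 (Set.Ioi 0)) (nhdsWithin 0 {x : ℝ | x ≠ 0}) := by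
  apply tendsto_nhdsWithin_of_tendsto_nhds_of_eventually_within
  · simpa using (tendsto_neg_nhdsGT (a := (0:ℝ))).mono_right nhdsWithin_le_nhds
  · filter_upwards [self_mem_nhdsWithin] with u hu
    simp only [Set.mem_setOf_eq, neg_ne_zero]
    exact ne_of_gt hu

lemma lim_G : Tendsto (fun u : ℝ => (1 - Real.exp (-u)) / u) (nhdsWithin 0 (Set.Ioi 0)) (nhds 1) := by
  have h := Real.hasDerivAt_exp 0
  rw [hasDerivAt_iff_tendsto_slope] at h
  have h2 := h.comp neg_tendsto
  rw [Real.exp_zero] at h2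
  refine h2.congr (fun u => ?_)
  simp only [Function.comp, slope_def_field]
  rw [Real.exp_zero, sub_zero, div_neg, ← neg_div, neg_sub]

lemma lim_F : Tendsto (fun u : ℝ => (u * Real.exp (-u) + Real.exp (-u) - 1) / u ^ 2)
    (nhdsWithin 0 (Set.Ioi 0)) (nhds (-(1/2))) := by
  have hf : ∀ u : ℝ, HasDerivAt (fun u : ℝ => u * Real.exp (-u) + Real.exp (-u) - 1)
      (-(u * Real.exp (-u))) u := by
    intro u
    have he : HasDerivAt (fun u : ℝ => Real.exp (-u)) (-Real.exp (-u)) u := by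
      exact ((Real.hasDerivAt_exp (-u)).comp u (hasDerivAt_neg u)).congr_deriv (by ring)
    have := ((hasDerivAt_id u).mul he).add he |>.sub_const 1
    refine this.congr_deriv ?_
    simp only [id_eq]
    ring
  have hg : ∀ u : ℝ, HasDerivAt (fun u : ℝ => u ^ 2) (2 * u) u := by
    intro u
    simpa [mul_comm] using hasDerivAt_pow 2 u
  apply HasDerivAt.lhopital_zero_nhdsGT (f' := fun u => -(u * Real.exp (-u)))
    (g' := fun u => 2 * u)
  · exact Eventually.of_forall fun u => hf u
  · exact Eventually.of_forall fun u => hg u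
  · filter_upwards [self_mem_nhdsWithin] with u hu
    have : (0:ℝ) < u := hu
    positivity
  · have : Tendsto (fun u : ℝ => u * Real.exp (-u) + Real.exp (-u) - 1) (nhds 0) (nhds 0) := by
      have : Continuous (fun u : ℝ => u * Real.exp (-u) + Real.exp (-u) - 1) := by continuity
      simpa using this.tendsto 0
    exact this.mono_left nhdsWithin_le_nhds
  · have : Tendsto (fun u : ℝ => u ^ 2) (nhds 0) (nhds 0) := by
      simpa using (continuous_pow 2).tendsto (0:ℝ)
    exact this.mono_left nhdsWithin_le_nhds
  · have key : Tendsto (fun u : ℝ => -(Real.exp (-u) / 2)) (nhdsWithin 0 (Set.Ioi 0)) (nhds (-(1/2))) := by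
      have : Continuous (fun u : ℝ => -(Real.exp (-u) / 2)) := by continuity
      have h0 := this.tendsto 0
      simp only [neg_zero, Real.exp_zero] at h0
      exact h0.mono_left nhdsWithin_le_nhds
    refine key.congr' ?_
    filter_upwards [self_mem_nhdsWithin] with u hu
    have hu0 : u ≠ 0 := ne_of_gt hu
    field_simp

theorem psiD_deriv_tendsto_zero_right (μ σ r : ℝ) (hμ0 : 0 < μ) (hμ1 : μ < 1) (hσ : 1 < σ)
    (hr : 1 ≤ r) :
    Tendsto (deriv (psiD μ σ r)) (nhdsWithin 0 (Set.Ioi 0))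
      (nhds (-(μ * r * Real.pi / 2))) := by
  set a : ℝ := (σ - 1) * r * Real.pi with ha
  have ha0 : 0 < a := by
    have : 0 < σ - 1 := by linarith
    positivity
  set c : ℝ := μ / (σ - 1) with hc
  set G : ℝ → ℝ := fun u => (1 - Real.exp (-u)) / u with hG
  set F : ℝ → ℝ := fun u => (u * Real.exp (-u) + Real.exp (-u) - 1) / u ^ 2 with hF
  -- derivative formula on Ioi 0
  have hderiv : ∀ τ ∈ Set.Ioi (0:ℝ), deriv (psiD μ σ r) τ = a * F (a * τ) * c * G (a * τ) ^ (c - 1) := by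
    intro τ hτ
    have hτ0 : (0:ℝ) < τ := hτ
    have hu0 : 0 < a * τ := mul_pos ha0 hτ0
    have hGpos : 0 < G (a * τ) := by
      apply div_pos _ hu0
      have : Real.exp (-(a * τ)) < 1 := by
        rw [Real.exp_lt_one_iff]; linarith
      linarith
    have hnum : HasDerivAt (fun τ : ℝ => 1 - Real.exp (-(a * τ))) (a * Real.exp (-(a * τ))) τ := by
      have h1 : HasDerivAt (fun τ : ℝ => -(a * τ)) (-a) τ := by
        exact ((hasDerivAt_id τ).const_mul a).neg.congr_deriv (by ring)
      have := (Real.hasDerivAt_exp (-(a * τ))).comp τ h1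
      have h2 := this.const_sub 1
      refine h2.congr_deriv ?_
      ring
    have hden : HasDerivAt (fun τ : ℝ => a * τ) a τ := by
      simpa using (hasDerivAt_id τ).const_mul a
    have hdiv : HasDerivAt (fun τ : ℝ => (1 - Real.exp (-(a * τ))) / (a * τ))
        ((a * Real.exp (-(a * τ)) * (a * τ) - (1 - Real.exp (-(a * τ))) * a) / (a * τ) ^ 2) τ :=
      hnum.div hden (ne_of_gt hu0)
    have hrpow := hdiv.rpow_const (p := c) (Or.inl (ne_of_gt hGpos))
    have heq : psiD μ σ r = fun τ : ℝ => ((1 - Real.exp (-(a * τ))) / (a * τ)) ^ c := by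
      funext t
      simp only [psiD, ha, hc]
      ring_nf
    rw [heq]
    rw [hrpow.deriv]
    have hfeq : (a * Real.exp (-(a * τ)) * (a * τ) - (1 - Real.exp (-(a * τ))) * a) / (a * τ) ^ 2
        = a * F (a * τ) := by
      rw [hF]; field_simp; ring
    rw [hfeq]
  -- the limit of the explicit formula
  have haτ : Tendsto (fun τ : ℝ => a * τ) (nhdsWithin 0 (Set.Ioi 0)) (nhdsWithin 0 (Set.Ioi 0)) := by
    apply tendsto_nhdsWithin_of_tendsto_nhds_of_eventually_within
    · have : Tendsto (fun τ : ℝ => a * τ) (nhds 0) (nhds (a * 0)) :=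
        (continuous_const.mul continuous_id).tendsto 0
      simpa using this.mono_left nhdsWithin_le_nhds
    · filter_upwards [self_mem_nhdsWithin] with τ hτ
      exact mul_pos ha0 hτ
  have hFlim : Tendsto (fun τ : ℝ => F (a * τ)) (nhdsWithin 0 (Set.Ioi 0)) (nhds (-(1/2))) :=
    lim_F.comp haτ
  have hGlim : Tendsto (fun τ : ℝ => G (a * τ)) (nhdsWithin 0 (Set.Ioi 0)) (nhds 1) :=
    lim_G.comp haτ
  have hGrpow : Tendsto (fun τ : ℝ => G (a * τ) ^ (c - 1)) (nhdsWithin 0 (Set.Ioi 0))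
      (nhds ((1:ℝ) ^ (c - 1))) := hGlim.rpow_const (Or.inl one_ne_zero)
  rw [Real.one_rpow] at hGrpow
  have hmain : Tendsto (fun τ : ℝ => a * F (a * τ) * c * G (a * τ) ^ (c - 1))
      (nhdsWithin 0 (Set.Ioi 0)) (nhds (a * (-(1/2)) * c * 1)) :=
    (((tendsto_const_nhds.mul hFlim).mul tendsto_const_nhds).mul hGrpow)
  have hval : a * (-(1/2)) * c * 1 = -(μ * r * Real.pi / 2) := by
    rw [ha, hc]
    have hσ1 : σ - 1 ≠ 0 := by intro h; linarith [sub_eq_zero.mp h]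
    field_simp
  rw [hval] at hmain
  refine hmain.congr' ?_
  filter_upwards [self_mem_nhdsWithin] with τ hτ
  exact (hderiv τ hτ).symm
end

section
/- There exists ε > 0 such that for every τ ∈ (0, ε), the derivative of F at τ is strictly positive: (d/dτ)F(τ) > 0. -/
open Real Filter Set Topology

/- auxiliary definitions -/

noncomputable def uu (A τ : ℝ) : ℝ := (1 - Real.exp (-(A * τ))) / (A * τ)

noncomputable def vv (B τ : ℝ) : ℝ := (Real.exp (B * τ) - 1) / (B * τ)

noncomputable def uu' (A τ : ℝ) : ℝ :=
  (A * Real.exp (-(A * τ)) * (A * τ) - (1 - Real.exp (-(A * τ))) * A) / (A * τ) ^ 2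

noncomputable def vv' (B τ : ℝ) : ℝ :=
  (B * Real.exp (B * τ) * (B * τ) - (Real.exp (B * τ) - 1) * B) / (B * τ) ^ 2

noncomputable def GG (A B p c τ : ℝ) : ℝ :=
  -(c * ((uu' A τ * p * uu A τ ^ (p - 1)) * vv B τ + uu A τ ^ p * vv' B τ))
    - uu' A τ * p * uu A τ ^ (p - 1)

/- limit lemmas -/

lemma lim1 : Tendsto (fun x : ℝ => (Real.exp x - 1) / x) (𝓝[≠] (0:ℝ)) (𝓝 1) := by
  have h := Real.hasDerivAt_exp 0
  rw [hasDerivAt_iff_tendsto_slope] at h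
  simpa [slope_fun_def_field, Real.exp_zero] using h

lemma lim2 : Tendsto (fun x : ℝ => (Real.exp x - 1 - x) / x ^ 2) (𝓝[≠] (0:ℝ)) (𝓝 (1/2)) := by
  apply HasDerivAt.lhopital_zero_nhdsNE
  · exact Eventually.of_forall fun x => by
      exact ((Real.hasDerivAt_exp x).sub_const 1).sub (hasDerivAt_id x)
  · exact Eventually.of_forall fun x => by simpa using hasDerivAt_pow 2 x
  · filter_upwards [eventually_mem_nhdsWithin] with x hx
    simpa using hx
  · have : Continuous fun x : ℝ => Real.exp x - 1 - x := by continuity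
    have h0 := this.tendsto 0
    simp only [Real.exp_zero, sub_self, sub_zero] at h0
    exact h0.mono_left nhdsWithin_le_nhds
  · have : Continuous fun x : ℝ => x ^ 2 := by continuity
    have h0 := this.tendsto 0
    simp only [ne_eq, OfNat.ofNat_ne_zero, not_false_eq_true, zero_pow] at h0
    exact h0.mono_left nhdsWithin_le_nhds
  · have h := lim1.const_mul (1/2 : ℝ)
    simp only [mul_one] at h
    refine h.congr fun x => by ring

lemma limPos : Tendsto (fun x : ℝ => (x * Real.exp x - (Real.exp x - 1)) / x ^ 2)
    (𝓝[≠] (0:ℝ)) (𝓝 (1/2)) := by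
  have h := lim1.sub lim2
  have he : (1 : ℝ) - 1/2 = 1/2 := by norm_num
  rw [he] at h
  refine h.congr' ?_
  filter_upwards [eventually_mem_nhdsWithin] with x hx
  have hx0 : x ≠ 0 := by simpa using hx
  field_simp
  ring

lemma limNeg : Tendsto (fun x : ℝ => (x * Real.exp (-x) - (1 - Real.exp (-x))) / x ^ 2)
    (𝓝[≠] (0:ℝ)) (𝓝 (-(1/2))) := by
  have hneg : Tendsto (fun x : ℝ => -x) (𝓝[≠] (0:ℝ)) (𝓝[≠] (0:ℝ)) := by
    rw [tendsto_nhdsWithin_iff]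
    constructor
    · simpa using (continuous_neg.tendsto (0:ℝ)).mono_left nhdsWithin_le_nhds
    · filter_upwards [eventually_mem_nhdsWithin] with x hx
      simpa using hx
  have h := (limPos.comp hneg).neg
  refine h.congr fun x => ?_
  simp only [Function.comp]
  ring

lemma tendsto_mul_right_nhdsNE (C : ℝ) (hC : 0 < C) :
    Tendsto (fun τ : ℝ => C * τ) (𝓝[>] (0:ℝ)) (𝓝[≠] (0:ℝ)) := by
  rw [tendsto_nhdsWithin_iff]
  constructor
  · have := (continuous_const.mul continuous_id : Continuous fun τ : ℝ => C * τ).tendsto 0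
    have h0 : Tendsto (fun τ : ℝ => C * τ) (𝓝 0) (𝓝 (C * 0)) := this
    simpa using h0.mono_left nhdsWithin_le_nhds
  · filter_upwards [self_mem_nhdsWithin] with τ hτ
    have : 0 < C * τ := mul_pos hC hτ
    simpa using ne_of_gt this

lemma tendsto_uu (A : ℝ) (hA : 0 < A) : Tendsto (uu A) (𝓝[>] (0:ℝ)) (𝓝 1) := by
  have hneg : Tendsto (fun τ : ℝ => -(A * τ)) (𝓝[>] (0:ℝ)) (𝓝[≠] (0:ℝ)) := by
    rw [tendsto_nhdsWithin_iff]
    constructor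
    · have := (continuous_const.mul continuous_id : Continuous fun τ : ℝ => A * τ).neg.tendsto 0
      have h0 : Tendsto (fun τ : ℝ => -(A * τ)) (𝓝 0) (𝓝 (-(A * 0))) := this
      simpa using h0.mono_left nhdsWithin_le_nhds
    · filter_upwards [self_mem_nhdsWithin] with τ hτ
      have : 0 < A * τ := mul_pos hA hτ
      simp only [mem_compl_iff, mem_singleton_iff]
      intro hcon
      exact absurd (neg_eq_zero.1 hcon) (ne_of_gt this)
  have h := lim1.comp hneg
  refine h.congr fun τ => ?_
  simp only [Function.comp, uu]
  rw [div_neg, ← neg_div, neg_sub]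

lemma tendsto_vv (B : ℝ) (hB : 0 < B) : Tendsto (vv B) (𝓝[>] (0:ℝ)) (𝓝 1) := by
  have h := lim1.comp (tendsto_mul_right_nhdsNE B hB)
  exact h.congr fun τ => rfl

lemma tendsto_uu' (A : ℝ) (hA : 0 < A) : Tendsto (uu' A) (𝓝[>] (0:ℝ)) (𝓝 (-(A/2))) := by
  have h := (limNeg.comp (tendsto_mul_right_nhdsNE A hA)).const_mul A
  have he : A * -(1/2 : ℝ) = -(A/2) := by ring
  rw [he] at h
  refine h.congr' ?_
  filter_upwards [self_mem_nhdsWithin] with τ hτ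
  have hAτ : (0:ℝ) < A * τ := mul_pos hA hτ
  simp only [Function.comp, uu']
  field_simp

lemma tendsto_vv' (B : ℝ) (hB : 0 < B) : Tendsto (vv' B) (𝓝[>] (0:ℝ)) (𝓝 (B/2)) := by
  have h := (limPos.comp (tendsto_mul_right_nhdsNE B hB)).const_mul B
  have he : B * (1/2 : ℝ) = B/2 := by ring
  rw [he] at h
  refine h.congr' ?_
  filter_upwards [self_mem_nhdsWithin] with τ hτ
  have hBτ : (0:ℝ) < B * τ := mul_pos hB hτ
  simp only [Function.comp, vv']
  field_simp

lemma uu_pos {A τ : ℝ} (hAτ : 0 < A * τ) : 0 < uu A τ := by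
  have h1 : Real.exp (-(A * τ)) < 1 := Real.exp_lt_one_iff.2 (neg_lt_zero.2 hAτ)
  exact div_pos (sub_pos.2 h1) hAτ

lemma hasDerivAt_uu (A τ : ℝ) (h : A * τ ≠ 0) : HasDerivAt (uu A) (uu' A τ) τ := by
  have h1 : HasDerivAt (fun t : ℝ => -(A * t)) (-A) τ := by
    have h0 := ((hasDerivAt_id τ).const_mul A).neg
    rw [mul_one] at h0
    exact h0
  have h2 : HasDerivAt (fun t : ℝ => Real.exp (-(A * t))) (Real.exp (-(A * τ)) * -A) τ :=
    (Real.hasDerivAt_exp _).comp τ h1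
  have h3 : HasDerivAt (fun t : ℝ => 1 - Real.exp (-(A * t))) (A * Real.exp (-(A * τ))) τ := by
    have := (hasDerivAt_const τ (1:ℝ)).sub h2
    exact this.congr_deriv (by ring)
  have h4 : HasDerivAt (fun t : ℝ => A * t) A τ := by
    simpa using (hasDerivAt_id τ).const_mul A
  exact h3.div h4 h

lemma hasDerivAt_vv (B τ : ℝ) (h : B * τ ≠ 0) : HasDerivAt (vv B) (vv' B τ) τ := by
  have h1 : HasDerivAt (fun t : ℝ => B * t) B τ := by
    simpa using (hasDerivAt_id τ).const_mul B
  have h2 : HasDerivAt (fun t : ℝ => Real.exp (B * t)) (Real.exp (B * τ) * B) τ :=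
    (Real.hasDerivAt_exp _).comp τ h1
  have h3 : HasDerivAt (fun t : ℝ => Real.exp (B * t) - 1) (B * Real.exp (B * τ)) τ := by
    have := h2.sub_const 1
    exact this.congr_deriv (by ring)
  exact h3.div h1 h

lemma hasDerivAt_GG (A B p c τ : ℝ) (hu0 : uu A τ ≠ 0) (hA : A * τ ≠ 0) (hB : B * τ ≠ 0) :
    HasDerivAt (fun t => 1 - c * (uu A t ^ p * vv B t - 1) - uu A t ^ p) (GG A B p c τ) τ := by
  have hu := hasDerivAt_uu A τ hA
  have hv := hasDerivAt_vv B τ hB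
  have hψ : HasDerivAt (fun t => uu A t ^ p) (uu' A τ * p * uu A τ ^ (p - 1)) τ :=
    hu.rpow_const (Or.inl hu0)
  have hmul := hψ.mul hv
  have h := ((hasDerivAt_const τ (1:ℝ)).sub ((hmul.sub_const 1).const_mul c)).sub hψ
  exact h.congr_deriv (by simp only [GG]; ring)

lemma tendsto_GG (A B p c : ℝ) (hA : 0 < A) (hB : 0 < B) (hpA : p * A = B) :
    Tendsto (fun τ => GG A B p c τ) (𝓝[>] (0:ℝ)) (𝓝 (B/2)) := by
  have hψ' : Tendsto (fun τ => uu' A τ * p * uu A τ ^ (p - 1)) (𝓝[>] (0:ℝ)) (𝓝 (-(B/2))) := by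
    have h := ((tendsto_uu' A hA).mul_const p).mul
      ((tendsto_uu A hA).rpow_const (p := p - 1) (Or.inl one_ne_zero))
    rw [Real.one_rpow, mul_one] at h
    have he : -(A/2) * p = -(B/2) := by rw [← hpA]; ring
    rwa [he] at h
  have hψ : Tendsto (fun τ => uu A τ ^ p) (𝓝[>] (0:ℝ)) (𝓝 1) := by
    have h := (tendsto_uu A hA).rpow_const (p := p) (Or.inl one_ne_zero)
    rwa [Real.one_rpow] at h
  have h := ((((hψ'.mul (tendsto_vv B hB)).add (hψ.mul (tendsto_vv' B hB))).const_mul c).neg).sub hψ'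
  have he : -(c * (-(B/2) * 1 + 1 * (B/2))) - -(B/2) = B/2 := by ring
  rwa [he] at h

theorem F_deriv_pos_near_zero (μ σ r : ℝ) (hμ0 : 0 < μ) (hμ1 : μ < 1) (hσ : 1 < σ)
    (hr : 1 ≤ r) :
    ∃ ε : ℝ, 0 < ε ∧ ∀ τ : ℝ, τ ∈ Set.Ioo 0 ε → 0 < deriv (Ffun μ σ r) τ := by
  have hr0 : (0:ℝ) < r := lt_of_lt_of_le one_pos hr
  have hσ1 : (0:ℝ) < σ - 1 := sub_pos.2 hσ
  have hπ : (0:ℝ) < π := Real.pi_pos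
  have hA : (0:ℝ) < (σ - 1) * r * π := by positivity
  have hB : (0:ℝ) < μ * r * π := by positivity
  have hpA : (μ / (σ - 1)) * ((σ - 1) * r * π) = μ * r * π := by
    field_simp
  have hFeq : Ffun μ σ r = fun τ =>
      1 - ((1 - μ) / μ) * (uu ((σ - 1) * r * π) τ ^ (μ / (σ - 1)) * vv (μ * r * π) τ - 1)
        - uu ((σ - 1) * r * π) τ ^ (μ / (σ - 1)) := by
    funext τ
    simp only [Ffun, psiD, chi, uu, vv]
    rw [show (σ - 1) * τ * r * π = (σ - 1) * r * π * τ from by ring,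
      show μ * τ * r * π = μ * r * π * τ from by ring]
  have hG := tendsto_GG ((σ - 1) * r * π) (μ * r * π) (μ / (σ - 1)) ((1 - μ) / μ) hA hB hpA
  have hpos : ∀ᶠ τ in 𝓝[>] (0:ℝ),
      0 < GG ((σ - 1) * r * π) (μ * r * π) (μ / (σ - 1)) ((1 - μ) / μ) τ :=
    hG.eventually (eventually_gt_nhds (by positivity))
  have hderiv : ∀ᶠ τ in 𝓝[>] (0:ℝ), deriv (Ffun μ σ r) τ =
      GG ((σ - 1) * r * π) (μ * r * π) (μ / (σ - 1)) ((1 - μ) / μ) τ := by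
    filter_upwards [self_mem_nhdsWithin] with τ hτ
    have hτ0 : (0:ℝ) < τ := hτ
    have hAτ : (0:ℝ) < (σ - 1) * r * π * τ := mul_pos hA hτ0
    have hBτ : (0:ℝ) < μ * r * π * τ := mul_pos hB hτ0
    have hu0 : uu ((σ - 1) * r * π) τ ≠ 0 := ne_of_gt (uu_pos hAτ)
    have h := hasDerivAt_GG ((σ - 1) * r * π) (μ * r * π) (μ / (σ - 1)) ((1 - μ) / μ) τ
      hu0 (ne_of_gt hAτ) (ne_of_gt hBτ)
    rw [hFeq]
    exact h.deriv
  have hfinal : ∀ᶠ τ in 𝓝[>] (0:ℝ), 0 < deriv (Ffun μ σ r) τ := by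
    filter_upwards [hpos, hderiv] with τ h1 h2
    rw [h2]; exact h1
  obtain ⟨u, hu, hsub⟩ := mem_nhdsGT_iff_exists_Ioo_subset.1 hfinal
  exact ⟨u, hu, fun τ hτ => hsub hτ⟩
end

section
/- There exists M > 0 such that for every τ > M, the derivative of F at τ is strictly negative: (d/dτ)F(τ) < 0. -/
open Real

lemma numpos (c β B eb : ℝ) (hc : 0 < c) (hβ : 0 < β) (hebp : 0 < eb)
    (heb1 : B + 1 ≤ eb) (hB' : c + 2*β*c + 2*β < c * B) :
    0 < c * (eb * B - eb + 1) - β * (c * (eb - 1) + B) := by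
  nlinarith [mul_pos (sub_pos.mpr hB') hebp,
    mul_le_mul_of_nonneg_left heb1 (le_of_lt hβ),
    mul_pos hβ hc, mul_pos hβ hebp]

theorem F_deriv_neg_eventually (μ σ r : ℝ) (hμ0 : 0 < μ) (hμ1 : μ < 1) (hσ : 1 < σ)
    (hr : 1 ≤ r) :
    ∃ M : ℝ, 0 < M ∧ ∀ τ : ℝ, M < τ → deriv (Ffun μ σ r) τ < 0 := by
  have hπ : (0:ℝ) < π := pi_pos
  have hr0 : (0:ℝ) < r := lt_of_lt_of_le one_pos hr
  have hσ1 : (0:ℝ) < σ - 1 := by linarith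
  set c : ℝ := (1 - μ) / μ with hc_def
  set β : ℝ := μ / (σ - 1) with hβ_def
  have hc : 0 < c := div_pos (by linarith) hμ0
  have hβ : 0 < β := div_pos hμ0 hσ1
  have hb : (0:ℝ) < μ * r * π := by positivity
  refine ⟨max 1 ((1 + 2*β + 2*β/c) / (μ * r * π)),
    lt_of_lt_of_le one_pos (le_max_left _ _), ?_⟩
  intro τ hτ
  have hτ1 : (1:ℝ) < τ := lt_of_le_of_lt (le_max_left _ _) hτ
  have hτ0 : (0:ℝ) < τ := by linarith
  -- abbreviations
  set A : ℝ := (σ - 1) * τ * r * π with hA_def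
  set B : ℝ := μ * τ * r * π with hB_def
  have hApos : 0 < A := by positivity
  have hBpos : 0 < B := by positivity
  have hBbig : 1 + 2*β + 2*β/c < B := by
    have h := lt_of_le_of_lt (le_max_right _ _) hτ
    have h2 := (div_lt_iff₀ hb).mp h
    calc 1 + 2*β + 2*β/c < τ * (μ * r * π) := h2
      _ = B := by rw [hB_def]; ring
  set ea : ℝ := Real.exp (-A) with hea_def
  set eb : ℝ := Real.exp B with heb_def
  have hea_pos : 0 < ea := exp_pos _
  have heb_pos : 0 < eb := exp_pos _
  have heb1 : B + 1 ≤ eb := Real.add_one_le_exp B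
  have hea_lt1 : ea < 1 := by
    rw [hea_def]; exact exp_lt_one_iff.mpr (by linarith)
  set u : ℝ := (1 - ea) / A with hu_def
  have hu_pos : 0 < u := div_pos (by linarith) hApos
  -- derivatives
  have hA_lin : HasDerivAt (fun t : ℝ => (σ - 1) * t * r * π) ((σ - 1) * r * π) τ := by
    simpa using (((hasDerivAt_id τ).const_mul (σ - 1)).mul_const r).mul_const π
  have hB_lin : HasDerivAt (fun t : ℝ => μ * t * r * π) (μ * r * π) τ := by
    simpa using (((hasDerivAt_id τ).const_mul μ).mul_const r).mul_const π
  have hN : HasDerivAt (fun t : ℝ => 1 - Real.exp (-((σ - 1) * t * r * π)))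
      (ea * ((σ - 1) * r * π)) τ := by
    have h := (hasDerivAt_const τ (1:ℝ)).sub hA_lin.neg.exp
    have e : ea * ((σ - 1) * r * π) = 0 - ea * -((σ - 1) * r * π) := by ring
    rw [e]; exact h
  have hu' : HasDerivAt
      (fun t : ℝ => (1 - Real.exp (-((σ - 1) * t * r * π))) / ((σ - 1) * t * r * π))
      ((ea * ((σ - 1) * r * π) * A - (1 - ea) * ((σ - 1) * r * π)) / A ^ 2) τ :=
    hN.div hA_lin (ne_of_gt hApos)
  set uder : ℝ := (ea * ((σ - 1) * r * π) * A - (1 - ea) * ((σ - 1) * r * π)) / A ^ 2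
    with huder_def
  have hψ : HasDerivAt
      (fun t : ℝ => ((1 - Real.exp (-((σ - 1) * t * r * π))) / ((σ - 1) * t * r * π)) ^ β)
      (uder * β * u ^ (β - 1)) τ :=
    hu'.rpow_const (Or.inl (ne_of_gt hu_pos))
  have hNχ : HasDerivAt (fun t : ℝ => Real.exp (μ * t * r * π) - 1) (eb * (μ * r * π)) τ :=
    hB_lin.exp.sub_const 1
  have hχ : HasDerivAt (fun t : ℝ => (Real.exp (μ * t * r * π) - 1) / (μ * t * r * π))
      ((eb * (μ * r * π) * B - (eb - 1) * (μ * r * π)) / B ^ 2) τ :=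
    hNχ.div hB_lin (ne_of_gt hBpos)
  set χder : ℝ := (eb * (μ * r * π) * B - (eb - 1) * (μ * r * π)) / B ^ 2 with hχder_def
  set ψder : ℝ := uder * β * u ^ (β - 1) with hψder_def
  set χv : ℝ := (eb - 1) / B with hχv_def
  have hF : HasDerivAt (Ffun μ σ r)
      (0 - c * (ψder * χv + u ^ β * χder) - ψder) τ := by
    have h1 : HasDerivAt (fun t : ℝ =>
        1 - c * (((1 - Real.exp (-((σ - 1) * t * r * π))) / ((σ - 1) * t * r * π)) ^ β *
          ((Real.exp (μ * t * r * π) - 1) / (μ * t * r * π)) - 1) -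
          ((1 - Real.exp (-((σ - 1) * t * r * π))) / ((σ - 1) * t * r * π)) ^ β)
        (0 - c * (ψder * χv + u ^ β * χder) - ψder) τ := by
      have h2 := ((hasDerivAt_const τ (1:ℝ)).sub
        (((hψ.mul hχ).sub_const 1).const_mul c)).sub hψ
      exact h2
    exact h1
  rw [hF.deriv]
  clear hF hψ hχ hu' hN hNχ hA_lin hB_lin
  -- sign analysis
  have hτne : τ ≠ 0 := ne_of_gt hτ0
  have hAne : A ≠ 0 := ne_of_gt hApos
  have hBne : B ≠ 0 := ne_of_gt hBpos
  have hAτ : A = ((σ - 1) * r * π) * τ := by rw [hA_def]; ring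
  have hBτ : B = (μ * r * π) * τ := by rw [hB_def]; ring
  have huder_eq : uder = ea / τ - u / τ := by
    rw [huder_def, hu_def, hAτ]
    field_simp
  have hχder_eq : χder = (eb * B - (eb - 1)) / (B * τ) := by
    rw [hχder_def, hBτ]
    field_simp
  have huβ : u ^ ((β:ℝ) - 1) = u ^ (β:ℝ) / u := by
    rw [Real.rpow_sub hu_pos, Real.rpow_one]
  have hP : 0 < u ^ (β:ℝ) := Real.rpow_pos_of_pos hu_pos β
  have huder_lb : -(u / τ) ≤ uder := by
    rw [huder_eq]
    have h3 : 0 ≤ ea / τ := le_of_lt (div_pos hea_pos hτ0)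
    linarith
  -- χ values
  have hχv_pos : 0 < χv := div_pos (by linarith) hBpos
  have hcχ1 : 0 < c * χv + 1 := by positivity
  -- key numeric inequality
  have hB' : c + 2*β*c + 2*β < c * B := by
    have h5 := mul_lt_mul_of_pos_left hBbig hc
    have h6 : c * (1 + 2*β + 2*β/c) = c + 2*β*c + 2*β := by
      field_simp
    linarith only [h5, h6]
  have hnum : 0 < c * (eb * B - eb + 1) - β * (c * (eb - 1) + B) :=
    numpos c β B eb hc hβ heb_pos heb1 hB'
  have key1 : β / τ * (c * χv + 1) < c * χder := by
    have heq : c * χder - β / τ * (c * χv + 1)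
        = (c * (eb * B - eb + 1) - β * (c * (eb - 1) + B)) / (B * τ) := by
      rw [hχder_eq, hχv_def]
      field_simp
      ring
    have hpos : 0 < c * χder - β / τ * (c * χv + 1) := by
      rw [heq]; exact div_pos hnum (mul_pos hBpos hτ0)
    linarith
  -- assemble
  have hψder_eq : ψder = u ^ (β:ℝ) * (β * uder / u) := by
    rw [hψder_def, huβ]
    field_simp
  have hs_lb : -(β / τ) ≤ β * uder / u := by
    rw [le_div_iff₀ hu_pos]
    have h7 := mul_le_mul_of_nonneg_left huder_lb (le_of_lt hβ)
    calc -(β / τ) * u = β * (-(u / τ)) := by ring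
      _ ≤ β * uder := h7
  have hinner : 0 < (β * uder / u) * (c * χv + 1) + c * χder := by
    have h10 : -(β / τ) * (c * χv + 1) ≤ (β * uder / u) * (c * χv + 1) :=
      mul_le_mul_of_nonneg_right hs_lb (le_of_lt hcχ1)
    have h11 : -(β / τ) * (c * χv + 1) = -(β / τ * (c * χv + 1)) := by ring
    linarith only [key1, h10, h11]
  have hfinal : 0 < u ^ (β:ℝ) * ((β * uder / u) * (c * χv + 1) + c * χder) :=
    mul_pos hP hinner
  have hrw : c * (ψder * χv + u ^ (β:ℝ) * χder) + ψder
      = u ^ (β:ℝ) * ((β * uder / u) * (c * χv + 1) + c * χder) := by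
    rw [hψder_eq]; ring
  linarith only [hfinal, hrw]
end

section
/- For every τ > 0, the second derivative of F at τ is strictly negative: (d²/dτ²)F(τ) < 0; that is, F is strictly concave on (0, ∞). -/
open Real

namespace FAux

noncomputable def Lf (x : ℝ) : ℝ := Real.log (1 - Real.exp (-x)) - Real.log x
noncomputable def Lf1 (x : ℝ) : ℝ := Real.exp (-x) / (1 - Real.exp (-x)) - x⁻¹
noncomputable def Lf2 (x : ℝ) : ℝ := (x ^ 2)⁻¹ - Real.exp (-x) / (1 - Real.exp (-x)) ^ 2

lemma one_sub_exp_pos {x : ℝ} (hx : 0 < x) : 0 < 1 - Real.exp (-x) := by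
  have : Real.exp (-x) < 1 := Real.exp_lt_one_iff.mpr (by linarith)
  linarith

/-- key inequality: x^2 * e^x < (e^x - 1)^2 for x > 0 -/
lemma key (x : ℝ) (hx : 0 < x) : x ^ 2 * Real.exp x < (Real.exp x - 1) ^ 2 := by
  have h1 : x / 2 < Real.sinh (x / 2) := Real.self_lt_sinh_iff.mpr (by linarith)
  have h2 : 0 < x / 2 := by linarith
  have h3 : (x / 2) ^ 2 < Real.sinh (x / 2) ^ 2 := by nlinarith
  have hs : Real.sinh (x / 2) = (Real.exp (x / 2) - Real.exp (-(x / 2))) / 2 := Real.sinh_eq _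
  have he : Real.exp (x / 2) * Real.exp (x / 2) = Real.exp x := by
    rw [← Real.exp_add]; ring_nf
  have he2 : Real.exp (x / 2) * Real.exp (-(x / 2)) = 1 := by
    rw [← Real.exp_add]; ring_nf; exact Real.exp_zero
  have hfact : (Real.exp x - 1) ^ 2 = Real.exp x * (2 * Real.sinh (x / 2)) ^ 2 := by
    rw [hs]; nlinarith [he, he2]
  rw [hfact]
  have := Real.exp_pos x
  nlinarith

lemma Lf2_pos {x : ℝ} (hx : 0 < x) : 0 < Lf2 x := by
  have h1 := one_sub_exp_pos hx
  have hE : Real.exp (-x) * Real.exp x = 1 := by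
    rw [← Real.exp_add]; simp
  have hk := key x hx
  have hmain : x ^ 2 * Real.exp (-x) < (1 - Real.exp (-x)) ^ 2 := by
    have hfac : (1 - Real.exp (-x)) ^ 2 = Real.exp (-x) ^ 2 * (Real.exp x - 1) ^ 2 := by
      linear_combination (2 * Real.exp (-x) - 1 - Real.exp (-x) * Real.exp x) * hE
    have hfac2 : x ^ 2 * Real.exp (-x) = Real.exp (-x) ^ 2 * (x ^ 2 * Real.exp x) := by
      linear_combination (-(x ^ 2) * Real.exp (-x)) * hE
    rw [hfac, hfac2]
    exact mul_lt_mul_of_pos_left hk (by positivity)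
  unfold Lf2
  rw [sub_pos, inv_eq_one_div, div_lt_div_iff₀ (by positivity) (by positivity)]
  nlinarith [hmain]

lemma hasDerivAt_inner {x : ℝ} : HasDerivAt (fun y => 1 - Real.exp (-y)) (Real.exp (-x)) x := by
  have h : HasDerivAt (fun y : ℝ => -y) (-1) x := (hasDerivAt_id x).neg
  have := (h.exp).const_sub 1
  simpa using this

lemma hasDerivAt_Lf {x : ℝ} (hx : 0 < x) : HasDerivAt Lf (Lf1 x) x := by
  have h1 : HasDerivAt (fun y => Real.log (1 - Real.exp (-y)))
      (Real.exp (-x) / (1 - Real.exp (-x))) x :=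
    hasDerivAt_inner.log (ne_of_gt (one_sub_exp_pos hx))
  have h2 := Real.hasDerivAt_log (ne_of_gt hx)
  exact h1.sub h2

lemma hasDerivAt_Lf1 {x : ℝ} (hx : 0 < x) : HasDerivAt Lf1 (Lf2 x) x := by
  have hne : (1 : ℝ) - Real.exp (-x) ≠ 0 := ne_of_gt (one_sub_exp_pos hx)
  have hneg : HasDerivAt (fun y : ℝ => Real.exp (-y)) (-Real.exp (-x)) x := by
    have h : HasDerivAt (fun y : ℝ => -y) (-1) x := (hasDerivAt_id x).neg
    simpa using h.exp
  have h1 : HasDerivAt (fun y => Real.exp (-y) / (1 - Real.exp (-y)))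
      ((-Real.exp (-x) * (1 - Real.exp (-x)) - Real.exp (-x) * Real.exp (-x)) /
        (1 - Real.exp (-x)) ^ 2) x := hneg.div hasDerivAt_inner hne
  have h2 : HasDerivAt (fun y : ℝ => y⁻¹) (-(x ^ 2)⁻¹) x := by
    simpa using hasDerivAt_inv (ne_of_gt hx)
  have := h1.sub h2
  refine this.congr_deriv ?_
  unfold Lf2
  field_simp
  ring

lemma hasDerivAt_Lf_comp {a τ : ℝ} (ha : 0 < a) (hτ : 0 < τ) :
    HasDerivAt (fun t => Lf (a * t)) (a * Lf1 (a * τ)) τ := by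
  have hmul : HasDerivAt (fun t : ℝ => a * t) a τ := by
    simpa using (hasDerivAt_id τ).const_mul a
  exact ((hasDerivAt_Lf (mul_pos ha hτ)).comp τ hmul).congr_deriv (mul_comm _ _)

lemma hasDerivAt_Lf1_comp {a τ : ℝ} (ha : 0 < a) (hτ : 0 < τ) :
    HasDerivAt (fun t => Lf1 (a * t)) (a * Lf2 (a * τ)) τ := by
  have hmul : HasDerivAt (fun t : ℝ => a * t) a τ := by
    simpa using (hasDerivAt_id τ).const_mul a
  exact ((hasDerivAt_Lf1 (mul_pos ha hτ)).comp τ hmul).congr_deriv (mul_comm _ _)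

noncomputable def F2 (a b c K τ : ℝ) : ℝ :=
  (1 + K) - K * Real.exp (c * Lf (a * τ) + (Lf (b * τ) + b * τ)) - Real.exp (c * Lf (a * τ))

noncomputable def F2d (a b c K τ : ℝ) : ℝ :=
  -(K * (Real.exp (c * Lf (a * τ) + (Lf (b * τ) + b * τ)) *
      (c * (a * Lf1 (a * τ)) + (b * Lf1 (b * τ) + b))))
    - Real.exp (c * Lf (a * τ)) * (c * (a * Lf1 (a * τ)))

noncomputable def F2dd (a b c K τ : ℝ) : ℝ :=
  -(K * (Real.exp (c * Lf (a * τ) + (Lf (b * τ) + b * τ)) *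
      ((c * (a * Lf1 (a * τ)) + (b * Lf1 (b * τ) + b)) ^ 2 +
        (c * (a * (a * Lf2 (a * τ))) + b * (b * Lf2 (b * τ))))))
    - Real.exp (c * Lf (a * τ)) *
        ((c * (a * Lf1 (a * τ))) ^ 2 + c * (a * (a * Lf2 (a * τ))))

lemma hasDerivAt_F2 {a b c K τ : ℝ} (ha : 0 < a) (hb : 0 < b) (hτ : 0 < τ) :
    HasDerivAt (F2 a b c K) (F2d a b c K τ) τ := by
  have hQ : HasDerivAt (fun t => c * Lf (a * t)) (c * (a * Lf1 (a * τ))) τ :=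
    (hasDerivAt_Lf_comp ha hτ).const_mul c
  have hlin : HasDerivAt (fun t : ℝ => b * t) b τ := by
    simpa using (hasDerivAt_id τ).const_mul b
  have hP : HasDerivAt (fun t => c * Lf (a * t) + (Lf (b * t) + b * t))
      (c * (a * Lf1 (a * τ)) + (b * Lf1 (b * τ) + b)) τ :=
    hQ.add ((hasDerivAt_Lf_comp hb hτ).add hlin)
  have h := ((hasDerivAt_const τ (1 + K)).sub (hP.exp.const_mul K)).sub hQ.exp
  refine h.congr_deriv ?_
  unfold F2d
  ring

lemma hasDerivAt_F2d {a b c K τ : ℝ} (ha : 0 < a) (hb : 0 < b) (hτ : 0 < τ) :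
    HasDerivAt (F2d a b c K) (F2dd a b c K τ) τ := by
  have hQ : HasDerivAt (fun t => c * Lf (a * t)) (c * (a * Lf1 (a * τ))) τ :=
    (hasDerivAt_Lf_comp ha hτ).const_mul c
  have hQ1 : HasDerivAt (fun t => c * (a * Lf1 (a * t))) (c * (a * (a * Lf2 (a * τ)))) τ :=
    ((hasDerivAt_Lf1_comp ha hτ).const_mul a).const_mul c
  have hlin : HasDerivAt (fun t : ℝ => b * t) b τ := by
    simpa using (hasDerivAt_id τ).const_mul b
  have hP : HasDerivAt (fun t => c * Lf (a * t) + (Lf (b * t) + b * t))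
      (c * (a * Lf1 (a * τ)) + (b * Lf1 (b * τ) + b)) τ :=
    hQ.add ((hasDerivAt_Lf_comp hb hτ).add hlin)
  have hP1 : HasDerivAt (fun t => c * (a * Lf1 (a * t)) + (b * Lf1 (b * t) + b))
      (c * (a * (a * Lf2 (a * τ))) + b * (b * Lf2 (b * τ))) τ := by
    have := hQ1.add (((hasDerivAt_Lf1_comp hb hτ).const_mul b).add_const b)
    exact this
  have h := (((hP.exp.mul hP1).const_mul K).neg).sub (hQ.exp.mul hQ1)
  refine h.congr_deriv ?_
  unfold F2dd
  ring

lemma F2dd_neg {a b c K τ : ℝ} (ha : 0 < a) (hb : 0 < b) (hc : 0 < c) (hK : 0 < K)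
    (hτ : 0 < τ) : F2dd a b c K τ < 0 := by
  have hQ2 : 0 < c * (a * (a * Lf2 (a * τ))) :=
    mul_pos hc (mul_pos ha (mul_pos ha (Lf2_pos (mul_pos ha hτ))))
  have hP2b : 0 < b * (b * Lf2 (b * τ)) :=
    mul_pos hb (mul_pos hb (Lf2_pos (mul_pos hb hτ)))
  have h1 : 0 < (c * (a * Lf1 (a * τ)) + (b * Lf1 (b * τ) + b)) ^ 2 +
      (c * (a * (a * Lf2 (a * τ))) + b * (b * Lf2 (b * τ))) := by
    have := sq_nonneg (c * (a * Lf1 (a * τ)) + (b * Lf1 (b * τ) + b))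
    linarith
  have h2 : 0 < (c * (a * Lf1 (a * τ))) ^ 2 + c * (a * (a * Lf2 (a * τ))) := by
    have := sq_nonneg (c * (a * Lf1 (a * τ)))
    linarith
  have e1 := Real.exp_pos (c * Lf (a * τ) + (Lf (b * τ) + b * τ))
  have e2 := Real.exp_pos (c * Lf (a * τ))
  unfold F2dd
  have t1 : 0 < K * (Real.exp (c * Lf (a * τ) + (Lf (b * τ) + b * τ)) *
      ((c * (a * Lf1 (a * τ)) + (b * Lf1 (b * τ) + b)) ^ 2 +
        (c * (a * (a * Lf2 (a * τ))) + b * (b * Lf2 (b * τ))))) :=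
    mul_pos hK (mul_pos e1 h1)
  have t2 : 0 < Real.exp (c * Lf (a * τ)) *
      ((c * (a * Lf1 (a * τ))) ^ 2 + c * (a * (a * Lf2 (a * τ)))) := mul_pos e2 h2
  linarith

end FAux

open FAux

theorem F_second_deriv_neg (μ σ r : ℝ) (hμ0 : 0 < μ) (hμ1 : μ < 1) (hσ : 1 < σ)
    (hr : 1 ≤ r) :
    (∀ τ : ℝ, 0 < τ → deriv (deriv (Ffun μ σ r)) τ < 0) ∧
      StrictConcaveOn ℝ (Set.Ioi 0) (Ffun μ σ r) := by
  have hπ := Real.pi_pos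
  set a : ℝ := (σ - 1) * r * Real.pi with ha_def
  set b : ℝ := μ * r * Real.pi with hb_def
  set c : ℝ := μ / (σ - 1) with hc_def
  set K : ℝ := (1 - μ) / μ with hK_def
  have hr0 : 0 < r := by linarith
  have hσ1 : 0 < σ - 1 := by linarith
  have ha : 0 < a := by positivity
  have hb : 0 < b := by positivity
  have hc : 0 < c := by positivity
  have hK : 0 < K := by
    apply div_pos <;> linarith
  -- Ffun agrees with F2 on Ioi 0
  have hFeq : ∀ τ : ℝ, 0 < τ → Ffun μ σ r τ = F2 a b c K τ := by
    intro τ hτ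
    have hxa : 0 < a * τ := mul_pos ha hτ
    have hxb : 0 < b * τ := mul_pos hb hτ
    have hpsi : psiD μ σ r τ = Real.exp (c * Lf (a * τ)) := by
      unfold psiD
      have harg : (σ - 1) * τ * r * Real.pi = a * τ := by rw [ha_def]; ring
      rw [harg]
      have hg : 0 < (1 - Real.exp (-(a * τ))) / (a * τ) :=
        div_pos (one_sub_exp_pos hxa) hxa
      rw [Real.rpow_def_of_pos hg,
        Real.log_div (ne_of_gt (one_sub_exp_pos hxa)) (ne_of_gt hxa)]
      rw [← hc_def]
      unfold Lf
      ring_nf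
    have hchi : chi μ r τ = Real.exp (Lf (b * τ) + b * τ) := by
      unfold chi
      have harg : μ * τ * r * Real.pi = b * τ := by rw [hb_def]; ring
      rw [harg]
      unfold Lf
      rw [Real.exp_add, Real.exp_sub, Real.exp_log (one_sub_exp_pos hxb),
        Real.exp_log hxb]
      have hE : Real.exp (-(b * τ)) * Real.exp (b * τ) = 1 := by
        rw [← Real.exp_add]; simp
      field_simp
      nlinarith [hE]
    unfold Ffun F2
    rw [hpsi, hchi, ← Real.exp_add, ← hK_def]
    ring
  -- second derivative equals F2dd
  have hdd : ∀ τ : ℝ, 0 < τ → deriv (deriv (Ffun μ σ r)) τ = F2dd a b c K τ := by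
    intro τ hτ
    have hmem : Set.Ioi (0 : ℝ) ∈ nhds τ := isOpen_Ioi.mem_nhds hτ
    have hev : Ffun μ σ r =ᶠ[nhds τ] F2 a b c K :=
      Filter.eventuallyEq_of_mem hmem fun y hy => hFeq y hy
    have e1 : deriv (Ffun μ σ r) =ᶠ[nhds τ] deriv (F2 a b c K) := hev.deriv
    have e2 : deriv (F2 a b c K) =ᶠ[nhds τ] F2d a b c K :=
      Filter.eventuallyEq_of_mem hmem fun y hy => (hasDerivAt_F2 ha hb hy).deriv
    calc deriv (deriv (Ffun μ σ r)) τ = deriv (F2d a b c K) τ := (e1.trans e2).deriv_eq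
      _ = F2dd a b c K τ := (hasDerivAt_F2d ha hb hτ).deriv
  have hmain : ∀ τ : ℝ, 0 < τ → deriv (deriv (Ffun μ σ r)) τ < 0 := by
    intro τ hτ
    rw [hdd τ hτ]
    exact F2dd_neg ha hb hc hK hτ
  refine ⟨hmain, ?_⟩
  have hcont : ContinuousOn (Ffun μ σ r) (Set.Ioi 0) := by
    intro τ hτ
    have hτ' : 0 < τ := hτ
    have hmem : Set.Ioi (0 : ℝ) ∈ nhds τ := isOpen_Ioi.mem_nhds hτ'
    have hev : Ffun μ σ r =ᶠ[nhds τ] F2 a b c K :=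
      Filter.eventuallyEq_of_mem hmem fun y hy => hFeq y hy
    have hc2 : ContinuousAt (F2 a b c K) τ :=
      (hasDerivAt_F2 ha hb hτ').differentiableAt.continuousAt
    exact (hc2.congr hev.symm).continuousWithinAt
  refine strictConcaveOn_of_deriv2_neg (convex_Ioi 0) hcont ?_
  intro x hx
  rw [interior_Ioi] at hx
  have : deriv^[2] (Ffun μ σ r) x = deriv (deriv (Ffun μ σ r)) x := rfl
  rw [this]
  exact hmain x hx
end

section
/- For every τ > 0, the second derivative of the function τ ↦ ln(ψᴰ(τ)) is strictly positive at τ; that is, ln ∘ ψᴰ is strictly convex on (0, ∞), hence ψᴰ is logarithmically convex and (d²/dτ²)ψᴰ(τ) > 0 for all τ > 0. -/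
open Real

/-- auxiliary log function -/
noncomputable def flAux (k c τ : ℝ) : ℝ :=
  k * (Real.log (1 - Real.exp (-(c * τ))) - Real.log (c * τ))

/-- first derivative -/
noncomputable def FdAux (k c τ : ℝ) : ℝ :=
  k * (c * Real.exp (-(c * τ)) / (1 - Real.exp (-(c * τ))) - τ⁻¹)

/-- second derivative -/
noncomputable def FddAux (k c τ : ℝ) : ℝ :=
  k * ((τ ^ 2)⁻¹ - c ^ 2 * Real.exp (-(c * τ)) / (1 - Real.exp (-(c * τ))) ^ 2)

lemma one_sub_exp_pos {c τ : ℝ} (hc : 0 < c) (hτ : 0 < τ) :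
    0 < 1 - Real.exp (-(c * τ)) := by
  have : Real.exp (-(c * τ)) < 1 := by
    rw [Real.exp_lt_one_iff]; nlinarith
  linarith

lemma hasDerivAt_flAux {k c τ : ℝ} (hc : 0 < c) (hτ : 0 < τ) :
    HasDerivAt (flAux k c) (FdAux k c τ) τ := by
  have hE := one_sub_exp_pos hc hτ
  have h1 : HasDerivAt (fun t : ℝ => -(c * t)) (-c) τ := by
    simpa using ((hasDerivAt_id τ).const_mul c).fun_neg
  have h2 : HasDerivAt (fun t : ℝ => Real.exp (-(c * t)))
      (Real.exp (-(c * τ)) * -c) τ := h1.exp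
  have h3 : HasDerivAt (fun t : ℝ => 1 - Real.exp (-(c * t)))
      (0 - Real.exp (-(c * τ)) * -c) τ := (hasDerivAt_const τ 1).sub h2
  have h4 : HasDerivAt (fun t : ℝ => Real.log (1 - Real.exp (-(c * t))))
      ((0 - Real.exp (-(c * τ)) * -c) / (1 - Real.exp (-(c * τ)))) τ := h3.log hE.ne'
  have h5 : HasDerivAt (fun t : ℝ => c * t) c τ := by
    simpa using (hasDerivAt_id τ).const_mul c
  have h6 : HasDerivAt (fun t : ℝ => Real.log (c * t)) (c / (c * τ)) τ :=
    h5.log (by positivity)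
  have h7 := ((h4.sub h6).const_mul k)
  refine h7.congr_deriv ?_
  unfold FdAux
  field_simp
  ring

lemma hasDerivAt_FdAux {k c τ : ℝ} (hc : 0 < c) (hτ : 0 < τ) :
    HasDerivAt (FdAux k c) (FddAux k c τ) τ := by
  have hE := one_sub_exp_pos hc hτ
  have h1 : HasDerivAt (fun t : ℝ => -(c * t)) (-c) τ := by
    simpa using ((hasDerivAt_id τ).const_mul c).fun_neg
  have h2 : HasDerivAt (fun t : ℝ => Real.exp (-(c * t)))
      (Real.exp (-(c * τ)) * -c) τ := h1.exp
  have hu : HasDerivAt (fun t : ℝ => c * Real.exp (-(c * t)))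
      (c * (Real.exp (-(c * τ)) * -c)) τ := h2.const_mul c
  have hv : HasDerivAt (fun t : ℝ => 1 - Real.exp (-(c * t)))
      (0 - Real.exp (-(c * τ)) * -c) τ := (hasDerivAt_const τ 1).sub h2
  have hq := hu.div hv hE.ne'
  have hinv : HasDerivAt (fun t : ℝ => t⁻¹) (-(τ ^ 2)⁻¹) τ := by
    simpa using hasDerivAt_inv hτ.ne'
  have h7 := (hq.sub hinv).const_mul k
  refine h7.congr_deriv ?_
  unfold FddAux
  set E := Real.exp (-(c * τ)) with hEdef
  field_simp
  ring

lemma FddAux_pos {k c τ : ℝ} (hk : 0 < k) (hc : 0 < c) (hτ : 0 < τ) :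
    0 < FddAux k c τ := by
  have hE := one_sub_exp_pos hc hτ
  set x := c * τ with hx
  have hx0 : 0 < x := by positivity
  -- key inequality: x * exp(-x/2) < 1 - exp(-x)
  have hsinh : x / 2 < Real.sinh (x / 2) := Real.self_lt_sinh_iff.mpr (by positivity)
  have e1 : Real.exp (-(x / 2)) * Real.exp (x / 2) = 1 := by
    rw [← Real.exp_add]; norm_num
  have e2 : Real.exp (-(x / 2)) * Real.exp (-(x / 2)) = Real.exp (-x) := by
    rw [← Real.exp_add]; congr 1; ring
  have hkey : x * Real.exp (-(x / 2)) < 1 - Real.exp (-x) := by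
    have h2 : 1 - Real.exp (-x) = 2 * Real.exp (-(x / 2)) * Real.sinh (x / 2) := by
      rw [Real.sinh_eq, ← e2, ← e1]; ring
    rw [h2]
    have he : 0 < Real.exp (-(x / 2)) := Real.exp_pos _
    nlinarith
  -- square it
  have hsq : x ^ 2 * Real.exp (-x) < (1 - Real.exp (-x)) ^ 2 := by
    have h1 : (x * Real.exp (-(x / 2))) ^ 2 = x ^ 2 * Real.exp (-x) := by
      rw [mul_pow, show Real.exp (-(x/2)) ^ 2 = Real.exp (-x) by rw [pow_two, e2]]
    have h2 : 0 ≤ x * Real.exp (-(x / 2)) := by positivity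
    nlinarith
  have hfrac : c ^ 2 * Real.exp (-(c * τ)) / (1 - Real.exp (-(c * τ))) ^ 2
      < (τ ^ 2)⁻¹ := by
    rw [div_lt_iff₀ (by positivity), ← hx]
    have : (τ ^ 2)⁻¹ * (1 - Real.exp (-x)) ^ 2 > (τ ^ 2)⁻¹ * (x ^ 2 * Real.exp (-x)) := by
      apply mul_lt_mul_of_pos_left hsq (by positivity)
    have hxe : (τ ^ 2)⁻¹ * (x ^ 2 * Real.exp (-x)) = c ^ 2 * Real.exp (-x) := by
      rw [hx]; field_simp
    linarith [hxe ▸ this]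
  unfold FddAux
  have : 0 < (τ ^ 2)⁻¹ - c ^ 2 * Real.exp (-(c * τ)) / (1 - Real.exp (-(c * τ))) ^ 2 := by
    linarith
  positivity

theorem log_psiD_strictly_convex (μ σ r : ℝ) (hμ0 : 0 < μ) (hμ1 : μ < 1) (hσ : 1 < σ)
    (hr : 1 ≤ r) :
    (∀ τ : ℝ, 0 < τ → 0 < deriv (deriv (fun t => Real.log (psiD μ σ r t))) τ) ∧
      StrictConvexOn ℝ (Set.Ioi 0) (fun t => Real.log (psiD μ σ r t)) ∧
      (∀ τ : ℝ, 0 < τ → 0 < deriv (deriv (psiD μ σ r)) τ) := by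
  set c : ℝ := (σ - 1) * r * Real.pi with hcdef
  set k : ℝ := μ / (σ - 1) with hkdef
  have hσ1 : 0 < σ - 1 := by linarith
  have hc : 0 < c := by
    have := Real.pi_pos
    have : 0 < r := lt_of_lt_of_le one_pos hr
    positivity
  have hk : 0 < k := by positivity
  -- log psiD = flAux on Ioi 0
  have hlogeq : ∀ τ : ℝ, 0 < τ → Real.log (psiD μ σ r τ) = flAux k c τ := by
    intro τ hτ
    have hE := one_sub_exp_pos hc hτ
    have harg : (σ - 1) * τ * r * Real.pi = c * τ := by rw [hcdef]; ring
    unfold psiD flAux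
    rw [harg, Real.log_rpow (by positivity), Real.log_div hE.ne' (by positivity)]
  -- psiD = exp ∘ flAux on Ioi 0
  have hpsieq : ∀ τ : ℝ, 0 < τ → psiD μ σ r τ = Real.exp (flAux k c τ) := by
    intro τ hτ
    have hE := one_sub_exp_pos hc hτ
    have harg : (σ - 1) * τ * r * Real.pi = c * τ := by rw [hcdef]; ring
    unfold psiD flAux
    rw [harg, Real.rpow_def_of_pos (by positivity),
      Real.log_div hE.ne' (by positivity)]
    ring_nf
    rw [hkdef]; ring_nf
  -- HasDerivAt of log psiD
  have hD1 : ∀ τ : ℝ, 0 < τ →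
      HasDerivAt (fun t => Real.log (psiD μ σ r t)) (FdAux k c τ) τ := by
    intro τ hτ
    refine (hasDerivAt_flAux hc hτ).congr_of_eventuallyEq ?_
    filter_upwards [Ioi_mem_nhds hτ] with t ht
    exact hlogeq t ht
  have hderiv1 : ∀ τ : ℝ, 0 < τ →
      deriv (fun t => Real.log (psiD μ σ r t)) τ = FdAux k c τ := fun τ hτ =>
    (hD1 τ hτ).deriv
  have hD2 : ∀ τ : ℝ, 0 < τ →
      HasDerivAt (deriv (fun t => Real.log (psiD μ σ r t))) (FddAux k c τ) τ := by
    intro τ hτ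
    refine (hasDerivAt_FdAux hc hτ).congr_of_eventuallyEq ?_
    filter_upwards [Ioi_mem_nhds hτ] with t ht
    exact hderiv1 t ht
  have part1 : ∀ τ : ℝ, 0 < τ →
      0 < deriv (deriv (fun t => Real.log (psiD μ σ r t))) τ := by
    intro τ hτ
    rw [(hD2 τ hτ).deriv]
    exact FddAux_pos hk hc hτ
  refine ⟨part1, ?_, ?_⟩
  · -- strict convexity
    apply strictConvexOn_of_deriv2_pos (convex_Ioi 0)
    · intro τ hτ
      exact (hD1 τ hτ).continuousAt.continuousWithinAt
    · intro τ hτ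
      rw [interior_Ioi] at hτ
      exact part1 τ hτ
  · -- second derivative of psiD itself
    intro τ hτ
    have hG : ∀ s : ℝ, 0 < s →
        HasDerivAt (psiD μ σ r) (Real.exp (flAux k c s) * FdAux k c s) s := by
      intro s hs
      refine (((hasDerivAt_flAux (k := k) hc hs).exp).congr_of_eventuallyEq ?_)
      filter_upwards [Ioi_mem_nhds hs] with t ht
      exact hpsieq t ht
    have hG' : HasDerivAt (fun s => Real.exp (flAux k c s) * FdAux k c s)
        (Real.exp (flAux k c τ) * FdAux k c τ * FdAux k c τ +
          Real.exp (flAux k c τ) * FddAux k c τ) τ :=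
      ((hasDerivAt_flAux (k := k) hc hτ).exp).mul (hasDerivAt_FdAux hc hτ)
    have hDD : HasDerivAt (deriv (psiD μ σ r))
        (Real.exp (flAux k c τ) * FdAux k c τ * FdAux k c τ +
          Real.exp (flAux k c τ) * FddAux k c τ) τ := by
      refine hG'.congr_of_eventuallyEq ?_
      filter_upwards [Ioi_mem_nhds hτ] with t ht
      exact (hG t ht).deriv
    rw [hDD.deriv]
    have h1 := FddAux_pos hk hc hτ
    have h2 : 0 < Real.exp (flAux k c τ) := Real.exp_pos _
    nlinarith [sq_nonneg (FdAux k c τ)]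
end

section
/- For every τ > 0, the second derivative of the function τ ↦ ln(ψᴰ(τ)·χ(τ)) is strictly positive at τ; that is, the product ψᴰ·χ is logarithmically convex on (0, ∞), hence (d²/dτ²)(ψᴰ(τ)·χ(τ)) > 0 for all τ > 0. -/
open Real

private lemma exp_sub_one_pos' {x : ℝ} (hx : 0 < x) : 0 < Real.exp x - 1 := by
  have := Real.add_one_lt_exp (ne_of_gt hx)
  linarith

/-- First derivative of `log (exp (k t) - 1) - log (k t)`. -/
private lemma hasDerivAt_A {k t : ℝ} (hk : 0 < k) (ht : 0 < t) :
    HasDerivAt (fun s => Real.log (Real.exp (k * s) - 1) - Real.log (k * s))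
      (k * Real.exp (k * t) / (Real.exp (k * t) - 1) - 1 / t) t := by
  have hkt : 0 < k * t := mul_pos hk ht
  have he : 0 < Real.exp (k * t) - 1 := exp_sub_one_pos' hkt
  have hlin : HasDerivAt (fun s : ℝ => k * s) (k * 1) t := (hasDerivAt_id t).const_mul k
  have h2 : HasDerivAt (fun s => Real.exp (k * s) - 1) (Real.exp (k * t) * (k * 1)) t :=
    (hlin.exp).sub_const 1
  have h3 := h2.log (ne_of_gt he)
  have h4 := hlin.log (ne_of_gt hkt)
  have h := h3.sub h4
  refine h.congr_deriv ?_
  field_simp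

/-- Second derivative of the same. -/
private lemma hasDerivAt_B {k t : ℝ} (hk : 0 < k) (ht : 0 < t) :
    HasDerivAt (fun s => k * Real.exp (k * s) / (Real.exp (k * s) - 1) - 1 / s)
      (-(k ^ 2 * Real.exp (k * t) / (Real.exp (k * t) - 1) ^ 2) + 1 / t ^ 2) t := by
  have hkt : 0 < k * t := mul_pos hk ht
  have he : 0 < Real.exp (k * t) - 1 := exp_sub_one_pos' hkt
  have hlin : HasDerivAt (fun s : ℝ => k * s) (k * 1) t := (hasDerivAt_id t).const_mul k
  have hnum : HasDerivAt (fun s => k * Real.exp (k * s)) (k * (Real.exp (k * t) * (k * 1))) t :=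
    (hlin.exp).const_mul k
  have hden : HasDerivAt (fun s => Real.exp (k * s) - 1) (Real.exp (k * t) * (k * 1)) t :=
    (hlin.exp).sub_const 1
  have hfrac := hnum.div hden (ne_of_gt he)
  have hinv : HasDerivAt (fun s : ℝ => 1 / s) (-(1 / t ^ 2)) t := by
    simpa [one_div] using hasDerivAt_inv (ne_of_gt ht)
  have h := hfrac.sub hinv
  refine h.congr_deriv ?_
  field_simp
  ring

/-- Positivity of the second derivative. -/
private lemma B_pos {k t : ℝ} (hk : 0 < k) (ht : 0 < t) :
    0 < -(k ^ 2 * Real.exp (k * t) / (Real.exp (k * t) - 1) ^ 2) + 1 / t ^ 2 := by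
  have hkt : 0 < k * t := mul_pos hk ht
  have he : 0 < Real.exp (k * t) - 1 := exp_sub_one_pos' hkt
  -- key: (e^x - 1)^2 > x^2 e^x for x = k t > 0
  have hsinh : k * t / 2 < Real.sinh (k * t / 2) := Real.self_lt_sinh_iff.mpr (by linarith)
  have hkey : (k * t) ^ 2 * Real.exp (k * t) < (Real.exp (k * t) - 1) ^ 2 := by
    have h1 : k * t * Real.exp (k * t / 2) < Real.exp (k * t) - 1 := by
      have hs := Real.sinh_eq (k * t / 2)
      have hexp : Real.exp (k * t) - 1 =
          Real.exp (k * t / 2) * (Real.exp (k * t / 2) - Real.exp (-(k * t / 2))) := by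
        rw [mul_sub, ← Real.exp_add, ← Real.exp_add]
        ring_nf
        simp
        ring
      rw [hexp]
      have h2 : k * t < Real.exp (k * t / 2) - Real.exp (-(k * t / 2)) := by
        rw [hs] at hsinh; linarith
      have hep : (0:ℝ) < Real.exp (k * t / 2) := Real.exp_pos _
      calc k * t * Real.exp (k * t / 2) = Real.exp (k * t / 2) * (k * t) := by ring
        _ < Real.exp (k * t / 2) * (Real.exp (k * t / 2) - Real.exp (-(k * t / 2))) := by
            exact (mul_lt_mul_iff_right₀ hep).mpr h2
    have hl : 0 < k * t * Real.exp (k * t / 2) := mul_pos hkt (Real.exp_pos _)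
    have := mul_self_lt_mul_self (le_of_lt hl) h1
    calc (k * t) ^ 2 * Real.exp (k * t)
        = (k * t * Real.exp (k * t / 2)) * (k * t * Real.exp (k * t / 2)) := by
          have hsplit : Real.exp (k * t) = Real.exp (k * t / 2) * Real.exp (k * t / 2) := by
            rw [← Real.exp_add]; ring_nf
          rw [hsplit]; ring
      _ < (Real.exp (k * t) - 1) * (Real.exp (k * t) - 1) := this
      _ = (Real.exp (k * t) - 1) ^ 2 := by ring
  rw [neg_add_eq_sub, sub_pos, div_lt_div_iff₀ (pow_pos he 2) (pow_pos ht 2)]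
  calc k ^ 2 * Real.exp (k * t) * t ^ 2 = (k * t) ^ 2 * Real.exp (k * t) := by ring
    _ < (Real.exp (k * t) - 1) ^ 2 := hkey
    _ = 1 * (Real.exp (k * t) - 1) ^ 2 := by ring

theorem log_psiD_mul_chi_strictly_convex (μ σ r : ℝ) (hμ0 : 0 < μ) (hμ1 : μ < 1) (hσ : 1 < σ)
    (hr : 1 ≤ r) :
    (∀ τ : ℝ, 0 < τ →
        0 < deriv (deriv (fun t => Real.log (psiD μ σ r t * chi μ r t))) τ) ∧
      StrictConvexOn ℝ (Set.Ioi 0) (fun t => Real.log (psiD μ σ r t * chi μ r t)) ∧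
      (∀ τ : ℝ, 0 < τ → 0 < deriv (deriv (fun t => psiD μ σ r t * chi μ r t)) τ) := by
  have hπ : (0:ℝ) < Real.pi := Real.pi_pos
  have hr0 : (0:ℝ) < r := lt_of_lt_of_le one_pos hr
  set a : ℝ := (σ - 1) * r * Real.pi with ha_def
  set b : ℝ := μ * r * Real.pi with hb_def
  set c : ℝ := μ / (σ - 1) with hc_def
  have hσ1 : 0 < σ - 1 := by linarith
  have ha : 0 < a := mul_pos (mul_pos hσ1 hr0) hπ
  have hb : 0 < b := mul_pos (mul_pos hμ0 hr0) hπ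
  have hc : 0 < c := div_pos hμ0 hσ1
  set G : ℝ → ℝ := fun t =>
    c * (-(a * t) + (Real.log (Real.exp (a * t) - 1) - Real.log (a * t))) +
      (Real.log (Real.exp (b * t) - 1) - Real.log (b * t)) with hG_def
  set G₁ : ℝ → ℝ := fun t =>
    c * (-a + (a * Real.exp (a * t) / (Real.exp (a * t) - 1) - 1 / t)) +
      (b * Real.exp (b * t) / (Real.exp (b * t) - 1) - 1 / t) with hG₁_def
  set G₂ : ℝ → ℝ := fun t =>
    c * (-(a ^ 2 * Real.exp (a * t) / (Real.exp (a * t) - 1) ^ 2) + 1 / t ^ 2) +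
      (-(b ^ 2 * Real.exp (b * t) / (Real.exp (b * t) - 1) ^ 2) + 1 / t ^ 2) with hG₂_def
  -- basic positivity facts
  have hbase : ∀ t : ℝ, 0 < t → 0 < (1 - Real.exp (-(a * t))) / (a * t) := by
    intro t ht
    have hat : 0 < a * t := mul_pos ha ht
    have : Real.exp (-(a * t)) < 1 := Real.exp_lt_one_iff.mpr (by linarith)
    exact div_pos (by linarith) hat
  have hpsiD_eq : ∀ t : ℝ, psiD μ σ r t = ((1 - Real.exp (-(a * t))) / (a * t)) ^ c := by
    intro t
    have h1 : (σ - 1) * t * r * Real.pi = a * t := by rw [ha_def]; ring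
    rw [psiD, h1, hc_def]
  have hchi_eq : ∀ t : ℝ, chi μ r t = (Real.exp (b * t) - 1) / (b * t) := by
    intro t
    have h1 : μ * t * r * Real.pi = b * t := by rw [hb_def]; ring
    rw [chi, h1]
  have hpsiD_pos : ∀ t : ℝ, 0 < t → 0 < psiD μ σ r t := by
    intro t ht; rw [hpsiD_eq t]; exact Real.rpow_pos_of_pos (hbase t ht) c
  have hchi_pos : ∀ t : ℝ, 0 < t → 0 < chi μ r t := by
    intro t ht; rw [hchi_eq t]
    exact div_pos (exp_sub_one_pos' (mul_pos hb ht)) (mul_pos hb ht)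
  -- the key pointwise identity
  have hEqOn : ∀ t ∈ Set.Ioi (0:ℝ), Real.log (psiD μ σ r t * chi μ r t) = G t := by
    intro t ht
    have ht : 0 < t := ht
    have hat : 0 < a * t := mul_pos ha ht
    have hbt : 0 < b * t := mul_pos hb ht
    have hea : 0 < Real.exp (a * t) - 1 := exp_sub_one_pos' hat
    have heb : 0 < Real.exp (b * t) - 1 := exp_sub_one_pos' hbt
    have hfac : 1 - Real.exp (-(a * t)) = Real.exp (-(a * t)) * (Real.exp (a * t) - 1) := by
      rw [mul_sub, ← Real.exp_add, neg_add_cancel, Real.exp_zero, mul_one]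
    rw [Real.log_mul (ne_of_gt (hpsiD_pos t ht)) (ne_of_gt (hchi_pos t ht)),
      hpsiD_eq t, hchi_eq t, Real.log_rpow (hbase t ht),
      Real.log_div (by rw [hfac]; positivity) (ne_of_gt hat),
      Real.log_div (ne_of_gt heb) (ne_of_gt hbt), hfac,
      Real.log_mul (Real.exp_ne_zero _) (ne_of_gt hea), Real.log_exp]
    ring
  -- derivatives of G
  have hG : ∀ t : ℝ, 0 < t → HasDerivAt G (G₁ t) t := by
    intro t ht
    have hlin : HasDerivAt (fun s : ℝ => -(a * s)) (-(a * 1)) t :=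
      ((hasDerivAt_id t).const_mul a).neg
    have h1 := (hlin.add (hasDerivAt_A ha ht)).const_mul c
    have h := h1.add (hasDerivAt_A hb ht)
    refine h.congr_deriv ?_
    simp [hG₁_def]
  have hG₁ : ∀ t : ℝ, 0 < t → HasDerivAt G₁ (G₂ t) t := by
    intro t ht
    have hconst : HasDerivAt (fun _ : ℝ => -a) 0 t := hasDerivAt_const t (-a)
    have h1 := (hconst.add (hasDerivAt_B ha ht)).const_mul c
    have h := h1.add (hasDerivAt_B hb ht)
    refine h.congr_deriv ?_
    simp [hG₂_def]
  have hG₂pos : ∀ t : ℝ, 0 < t → 0 < G₂ t := fun t ht =>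
    add_pos (mul_pos hc (B_pos ha ht)) (B_pos hb ht)
  -- eventual equality machinery
  have hFev : ∀ τ : ℝ, 0 < τ →
      (fun t => Real.log (psiD μ σ r t * chi μ r t)) =ᶠ[nhds τ] G := fun τ hτ =>
    Filter.eventuallyEq_of_mem (Ioi_mem_nhds hτ) hEqOn
  have hGd : ∀ τ : ℝ, 0 < τ → deriv G =ᶠ[nhds τ] G₁ := fun τ hτ =>
    Filter.eventuallyEq_of_mem (Ioi_mem_nhds hτ) fun t ht => (hG t ht).deriv
  have hdd : ∀ τ : ℝ, 0 < τ →
      deriv (deriv (fun t => Real.log (psiD μ σ r t * chi μ r t))) τ = G₂ τ := by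
    intro τ hτ
    have h1 : deriv (fun t => Real.log (psiD μ σ r t * chi μ r t)) =ᶠ[nhds τ] G₁ :=
      ((hFev τ hτ).deriv).trans (hGd τ hτ)
    rw [h1.deriv_eq, (hG₁ τ hτ).deriv]
  refine ⟨fun τ hτ => by rw [hdd τ hτ]; exact hG₂pos τ hτ, ?_, ?_⟩
  · -- strict convexity
    apply strictConvexOn_of_deriv2_pos (convex_Ioi 0)
    · intro t ht
      have ht : (0:ℝ) < t := ht
      have : DifferentiableAt ℝ (fun t => Real.log (psiD μ σ r t * chi μ r t)) t :=
        ((hFev t ht).differentiableAt_iff).mpr (hG t ht).differentiableAt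
      exact this.continuousAt.continuousWithinAt
    · intro x hx
      rw [interior_Ioi] at hx
      have : deriv^[2] (fun t => Real.log (psiD μ σ r t * chi μ r t)) x =
          deriv (deriv (fun t => Real.log (psiD μ σ r t * chi μ r t))) x := rfl
      rw [this, hdd x hx]
      exact hG₂pos x hx
  · -- convexity of the product itself
    intro τ hτ
    set E : ℝ → ℝ := fun t => Real.exp (G t) with hE_def
    set E₁ : ℝ → ℝ := fun t => Real.exp (G t) * G₁ t with hE₁_def
    have hPE : ∀ t ∈ Set.Ioi (0:ℝ), psiD μ σ r t * chi μ r t = E t := by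
      intro t ht
      have hp : 0 < psiD μ σ r t * chi μ r t := mul_pos (hpsiD_pos t ht) (hchi_pos t ht)
      show psiD μ σ r t * chi μ r t = Real.exp (G t)
      rw [← hEqOn t ht, Real.exp_log hp]
    have hE : ∀ t : ℝ, 0 < t → HasDerivAt E (E₁ t) t := fun t ht => (hG t ht).exp
    have hE₁ : ∀ t : ℝ, 0 < t →
        HasDerivAt E₁ (Real.exp (G t) * G₁ t * G₁ t + Real.exp (G t) * G₂ t) t := fun t ht =>
      ((hG t ht).exp).mul (hG₁ t ht)
    have hPev : (fun t => psiD μ σ r t * chi μ r t) =ᶠ[nhds τ] E :=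
      Filter.eventuallyEq_of_mem (Ioi_mem_nhds hτ) hPE
    have hEd : deriv E =ᶠ[nhds τ] E₁ :=
      Filter.eventuallyEq_of_mem (Ioi_mem_nhds hτ) fun t ht => (hE t ht).deriv
    have h1 : deriv (fun t => psiD μ σ r t * chi μ r t) =ᶠ[nhds τ] E₁ :=
      (hPev.deriv).trans hEd
    rw [h1.deriv_eq, (hE₁ τ hτ).deriv]
    have hexp : 0 < Real.exp (G τ) := Real.exp_pos _
    nlinarith [sq_nonneg (G₁ τ), hG₂pos τ hτ, mul_pos hexp (hG₂pos τ hτ)]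
end

section
/- F(τ) tends to 0 as τ tends to 0 from the right, and there exists M > 0 such that F(τ) < 0 for every τ > M. -/
open Real Filter

theorem F_limits (μ σ r : ℝ) (hμ0 : 0 < μ) (hμ1 : μ < 1) (hσ : 1 < σ) (hr : 1 ≤ r) :
    Tendsto (Ffun μ σ r) (nhdsWithin 0 (Set.Ioi 0)) (nhds 0) ∧
      ∃ M : ℝ, 0 < M ∧ ∀ τ : ℝ, M < τ → Ffun μ σ r τ < 0 := by
  have hσ1 : (0:ℝ) < σ - 1 := by linarith
  have hπ : (0:ℝ) < Real.pi := Real.pi_pos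
  have hr0 : (0:ℝ) < r := lt_of_lt_of_le one_pos hr
  set c : ℝ := (σ - 1) * r * Real.pi with hc_def
  have hc : 0 < c := by positivity
  set d : ℝ := μ * r * Real.pi with hd_def
  have hd : 0 < d := by positivity
  set p : ℝ := μ / (σ - 1) with hp_def
  have hp : 0 < p := div_pos hμ0 hσ1
  clear_value c d p
  have hcτ : ∀ τ : ℝ, (σ - 1) * τ * r * Real.pi = c * τ := by
    intro τ; rw [hc_def]; ring
  have hdτ : ∀ τ : ℝ, μ * τ * r * Real.pi = d * τ := by
    intro τ; rw [hd_def]; ring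
  -- slope limit
  have hslope : Tendsto (fun y : ℝ => (Real.exp y - 1) / y) (nhdsWithin 0 {(0:ℝ)}ᶜ) (nhds 1) := by
    have h := hasDerivAt_iff_tendsto_slope.mp (Real.hasDerivAt_exp 0)
    rw [Real.exp_zero] at h
    refine h.congr fun y => ?_
    rw [slope_def_field, Real.exp_zero, sub_zero]
  have hexp2 : (2:ℝ) ≤ Real.exp 1 := by
    have := Real.add_one_le_exp (1:ℝ); linarith
  -- Part 1
  have hmap : ∀ a : ℝ, a ≠ 0 → Tendsto (fun τ : ℝ => a * τ)
      (nhdsWithin 0 (Set.Ioi 0)) (nhdsWithin 0 {(0:ℝ)}ᶜ) := by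
    intro a ha
    apply tendsto_nhdsWithin_of_tendsto_nhds_of_eventually_within
    · have : Tendsto (fun τ : ℝ => a * τ) (nhds 0) (nhds (a * 0)) :=
        (continuous_const.mul continuous_id).tendsto 0
      rw [mul_zero] at this
      exact this.mono_left nhdsWithin_le_nhds
    · filter_upwards [self_mem_nhdsWithin] with τ hτ
      exact mul_ne_zero ha (ne_of_gt hτ)
  have hχ1 : Tendsto (chi μ r) (nhdsWithin 0 (Set.Ioi 0)) (nhds 1) := by
    refine (hslope.comp (hmap d (ne_of_gt hd))).congr fun τ => ?_
    simp only [Function.comp_apply, chi, hdτ]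
  have hbase1 : Tendsto (fun τ : ℝ => (1 - Real.exp (-(c * τ))) / (c * τ))
      (nhdsWithin 0 (Set.Ioi 0)) (nhds 1) := by
    refine (hslope.comp (hmap (-c) (ne_of_gt (neg_neg_iff_pos.mpr hc)).symm)).congr fun τ => ?_
    simp only [Function.comp_apply]
    rw [show -c * τ = -(c * τ) by ring, div_neg, ← neg_div, neg_sub]
  have hψ1 : Tendsto (psiD μ σ r) (nhdsWithin 0 (Set.Ioi 0)) (nhds 1) := by
    have hcont : ContinuousAt (fun x : ℝ => x ^ p) 1 :=
      Real.continuousAt_rpow_const 1 p (Or.inl one_ne_zero)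
    have := hcont.tendsto.comp hbase1
    rw [Real.one_rpow] at this
    refine this.congr fun τ => ?_
    simp only [Function.comp_apply, psiD, hcτ, ← hp_def]
  have part1 : Tendsto (Ffun μ σ r) (nhdsWithin 0 (Set.Ioi 0)) (nhds 0) := by
    have h : Tendsto (fun τ : ℝ => 1 - (1 - μ) / μ * (psiD μ σ r τ * chi μ r τ - 1) - psiD μ σ r τ)
        (nhdsWithin 0 (Set.Ioi 0)) (nhds (1 - (1 - μ) / μ * (1 * 1 - 1) - 1)) :=
      (tendsto_const_nhds.sub
        (tendsto_const_nhds.mul ((hψ1.mul hχ1).sub tendsto_const_nhds))).sub hψ1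
    have heq : (1:ℝ) - (1 - μ) / μ * (1 * 1 - 1) - 1 = 0 := by ring
    rw [heq] at h
    exact h.congr fun τ => by simp only [Ffun]
  refine ⟨part1, ?_⟩
  -- Part 2
  have hψnn : ∀ τ : ℝ, 0 < τ → 0 ≤ psiD μ σ r τ := by
    intro τ hτ
    apply Real.rpow_nonneg
    apply div_nonneg _ (by rw [hcτ]; positivity)
    have : Real.exp (-((σ - 1) * τ * r * Real.pi)) ≤ 1 := by
      rw [Real.exp_le_one_iff, hcτ]; nlinarith [mul_pos hc hτ]
    linarith
  have hψlb : ∀ τ : ℝ, 1 / c ≤ τ → ((2 * (c * τ))⁻¹ : ℝ) ^ p ≤ psiD μ σ r τ := by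
    intro τ hτ
    have hτ0 : 0 < τ := lt_of_lt_of_le (by positivity) hτ
    have h1 : (1:ℝ) ≤ c * τ := by rw [div_le_iff₀ hc, mul_comm] at hτ; exact hτ
    have hexp : Real.exp (-(c * τ)) ≤ 1 / 2 := by
      have : Real.exp (-(c * τ)) ≤ Real.exp (-1) := Real.exp_le_exp.mpr (by linarith)
      have h2 : Real.exp (-1) ≤ 1 / 2 := by
        rw [Real.exp_neg]
        rw [inv_le_comm₀ (Real.exp_pos 1) (by norm_num)]
        linarith
      linarith
    have hb : (2 * (c * τ))⁻¹ ≤ (1 - Real.exp (-(c * τ))) / (c * τ) := by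
      rw [show (2 * (c * τ))⁻¹ = (1/2) / (c * τ) by rw [one_div, mul_inv]; ring]
      apply div_le_div_of_nonneg_right _ (by positivity)
      · linarith
    unfold psiD
    rw [hcτ, ← hp_def]
    exact Real.rpow_le_rpow (by positivity) hb (le_of_lt hp)
  have hχlb : ∀ τ : ℝ, 1 / d ≤ τ → Real.exp (d * τ) / (2 * (d * τ)) ≤ chi μ r τ := by
    intro τ hτ
    have hτ0 : 0 < τ := lt_of_lt_of_le (by positivity) hτ
    have h1 : (1:ℝ) ≤ d * τ := by rw [div_le_iff₀ hd, mul_comm] at hτ; exact hτ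
    have hE : (2:ℝ) ≤ Real.exp (d * τ) := le_trans hexp2 (Real.exp_le_exp.mpr (by linarith))
    unfold chi
    rw [hdτ]
    rw [show Real.exp (d * τ) / (2 * (d * τ)) = (Real.exp (d * τ) / 2) / (d * τ) by
      rw [div_div]]
    apply div_le_div_of_nonneg_right _ (by positivity)
    · nlinarith
  -- the lower bound function tends to atTop
  set C : ℝ := ((2 * c)⁻¹ : ℝ) ^ p * (2 * d)⁻¹ with hC_def
  have hC : 0 < C := by
    rw [hC_def]
    apply mul_pos _ (by positivity)
    apply Real.rpow_pos_of_pos (by positivity)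
  clear_value C
  have key : ∀ τ : ℝ, 0 < τ →
      ((2 * (c * τ))⁻¹ : ℝ) ^ p * (Real.exp (d * τ) / (2 * (d * τ)))
        = C * (Real.exp (d * τ) / τ ^ (p + 1)) := by
    intro τ hτ
    have hA : (0:ℝ) < τ ^ p := Real.rpow_pos_of_pos hτ p
    rw [show (2 * (c * τ))⁻¹ = (2 * c)⁻¹ * τ⁻¹ by rw [mul_inv, mul_inv]; ring,
      Real.mul_rpow (by positivity) (by positivity),
      Real.inv_rpow hτ.le, Real.rpow_add hτ p 1, Real.rpow_one, hC_def]
    simp only [div_eq_mul_inv, mul_inv]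
    ring
  have hL : Tendsto (fun τ : ℝ => ((2 * (c * τ))⁻¹ : ℝ) ^ p * (Real.exp (d * τ) / (2 * (d * τ))))
      atTop atTop := by
    have hbase : Tendsto (fun τ : ℝ => Real.exp (d * τ) / τ ^ (p + 1)) atTop atTop :=
      tendsto_exp_mul_div_rpow_atTop (p + 1) d hd
    refine Tendsto.congr' ?_ (hbase.const_mul_atTop hC)
    filter_upwards [eventually_gt_atTop (0:ℝ)] with τ hτ
    exact (key τ hτ).symm
  have hprod : Tendsto (fun τ : ℝ => psiD μ σ r τ * chi μ r τ) atTop atTop := by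
    apply tendsto_atTop_mono' atTop _ hL
    filter_upwards [eventually_ge_atTop (1 / c), eventually_ge_atTop (1 / d),
      eventually_gt_atTop (0:ℝ)] with τ h1 h2 h3
    have hnn1 : (0:ℝ) ≤ ((2 * (c * τ))⁻¹ : ℝ) ^ p := Real.rpow_nonneg (by positivity) p
    have hnn2 : (0:ℝ) ≤ Real.exp (d * τ) / (2 * (d * τ)) := by positivity
    exact mul_le_mul (hψlb τ h1) (hχlb τ h2) hnn2
      (le_trans hnn1 (hψlb τ h1))
  have hev : ∀ᶠ τ : ℝ in atTop, Ffun μ σ r τ < 0 := by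
    have hk : 0 < (1 - μ) / μ := div_pos (by linarith) hμ0
    filter_upwards [hprod.eventually_gt_atTop ((1 + (1 - μ) / μ) / ((1 - μ) / μ)),
      eventually_gt_atTop (0:ℝ)] with τ hgt hτ
    have h1 : 1 + (1 - μ) / μ < (1 - μ) / μ * (psiD μ σ r τ * chi μ r τ) := by
      rw [div_lt_iff₀ hk] at hgt; linarith [hgt]
    have h2 : 0 ≤ psiD μ σ r τ := hψnn τ hτ
    have h3 : (1 - μ) / μ * (psiD μ σ r τ * chi μ r τ - 1)
        = (1 - μ) / μ * (psiD μ σ r τ * chi μ r τ) - (1 - μ) / μ := by ring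
    unfold Ffun
    rw [h3]
    linarith
  obtain ⟨N, hN⟩ := eventually_atTop.mp hev
  refine ⟨max N 1, lt_of_lt_of_le one_pos (le_max_right N 1), fun τ hτ => ?_⟩
  exact hN τ (le_of_lt (lt_of_le_of_lt (le_max_left N 1) hτ))
end

section
/- For every τ > 0, one has exp(-μ·τ·r·π) < ψᴰ(τ) < 1; consequently there exists a unique Δ ∈ (0, r·π) such that exp(-μ·τ·Δ) = ψᴰ(τ), and for d ∈ [0, r·π] one has exp(-μ·τ·d) > ψᴰ(τ) if d < Δ and exp(-μ·τ·d) < ψᴰ(τ) if d > Δ. (In the model, this identifies the neighborhood Γ of the city x* in which agricultural workers, whose real wage at the agglomeration equilibrium at distance d from x* equals exp(-μτd), prefer agglomeration over dispersion, while agricultural workers outside Γ prefer dispersion.) -/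
open Real

theorem exists_Gamma (μ σ r : ℝ) (hμ0 : 0 < μ) (hμ1 : μ < 1) (hσ : 1 < σ) (hr : 1 ≤ r)
    (τ : ℝ) (hτ : 0 < τ) :
    Real.exp (-(μ * τ * r * Real.pi)) < psiD μ σ r τ ∧ psiD μ σ r τ < 1 ∧
      ∃ Δ : ℝ, Δ ∈ Set.Ioo 0 (r * Real.pi) ∧ Real.exp (-(μ * τ * Δ)) = psiD μ σ r τ ∧
        (∀ Δ' : ℝ, Δ' ∈ Set.Ioo 0 (r * Real.pi) →
          Real.exp (-(μ * τ * Δ')) = psiD μ σ r τ → Δ' = Δ) ∧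
        (∀ d : ℝ, d ∈ Set.Icc 0 (r * Real.pi) →
          (d < Δ → psiD μ σ r τ < Real.exp (-(μ * τ * d))) ∧
          (Δ < d → Real.exp (-(μ * τ * d)) < psiD μ σ r τ)) := by
  have hσ1 : 0 < σ - 1 := by linarith
  have hπ : 0 < Real.pi := Real.pi_pos
  have hr0 : 0 < r := lt_of_lt_of_le one_pos hr
  set a : ℝ := (σ - 1) * τ * r * Real.pi with ha_def
  have ha : 0 < a := by positivity
  have hane : a ≠ 0 := ne_of_gt ha
  -- the base
  set b : ℝ := (1 - Real.exp (-a)) / a with hb_def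
  have hea1 : Real.exp (-a) < 1 := by
    rw [Real.exp_lt_one_iff]; linarith
  have hb0 : 0 < b := by
    apply div_pos _ ha; linarith
  have h1 : a + 1 < Real.exp a := Real.add_one_lt_exp hane
  have h2 : Real.exp (-a) * Real.exp a = 1 := by
    rw [← Real.exp_add]; simp
  have hlow : Real.exp (-a) < b := by
    rw [lt_div_iff₀ ha]
    nlinarith [Real.exp_pos (-a)]
  have hhigh : b < 1 := by
    rw [div_lt_one ha]
    have := Real.add_one_lt_exp (neg_ne_zero.mpr hane)
    linarith
  set p : ℝ := μ / (σ - 1) with hp_def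
  have hp : 0 < p := div_pos hμ0 hσ1
  have hpsi : psiD μ σ r τ = b ^ p := rfl
  have hap : -a * p = -(μ * τ * r * Real.pi) := by
    field_simp [ha_def, hp_def]
    rw [ha_def, hp_def, mul_div_assoc', neg_inj, div_eq_iff hσ1.ne']
    ring
  have hψ0 : 0 < psiD μ σ r τ := by
    rw [hpsi]; exact Real.rpow_pos_of_pos hb0 p
  have hψlow : Real.exp (-(μ * τ * r * Real.pi)) < psiD μ σ r τ := by
    have := Real.rpow_lt_rpow (le_of_lt (Real.exp_pos (-a))) hlow hp
    rw [← Real.exp_mul, hap] at this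
    rwa [hpsi]
  have hψhigh : psiD μ σ r τ < 1 := by
    have := Real.rpow_lt_rpow (le_of_lt hb0) hhigh hp
    rwa [Real.one_rpow, ← hpsi] at this
  refine ⟨hψlow, hψhigh, ?_⟩
  have hμτ : 0 < μ * τ := mul_pos hμ0 hτ
  set ψ := psiD μ σ r τ
  have hlogneg : Real.log ψ < 0 := Real.log_neg hψ0 hψhigh
  have hloggt : -(μ * τ * r * Real.pi) < Real.log ψ :=
    (Real.lt_log_iff_exp_lt hψ0).mpr hψlow
  refine ⟨-(Real.log ψ) / (μ * τ), ⟨?_, ?_⟩, ?_, ?_, ?_⟩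
  · apply div_pos _ hμτ; linarith
  · rw [div_lt_iff₀ hμτ]; nlinarith
  · rw [show -(μ * τ * (-(Real.log ψ) / (μ * τ))) = Real.log ψ by
      field_simp]
    exact Real.exp_log hψ0
  · intro Δ' _ hΔ'
    have hkey : Real.exp (-(μ * τ * Δ')) = Real.exp (Real.log ψ) := by
      rw [Real.exp_log hψ0]; exact hΔ'
    have := Real.exp_injective hkey
    field_simp
    linarith
  · intro d _
    have hψeq : ψ = Real.exp (Real.log ψ) := (Real.exp_log hψ0).symm
    constructor
    · intro hd
      rw [lt_div_iff₀ hμτ] at hd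
      calc ψ = Real.exp (Real.log ψ) := hψeq
        _ < Real.exp (-(μ * τ * d)) := Real.exp_lt_exp.mpr (by nlinarith)
    · intro hd
      rw [div_lt_iff₀ hμτ] at hd
      calc Real.exp (-(μ * τ * d)) < Real.exp (Real.log ψ) :=
            Real.exp_lt_exp.mpr (by nlinarith)
        _ = ψ := hψeq.symm
end
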